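/- arXiv:2512.24317 — 8 statements merged into one kernel-verified Lean document; each statement's English description precedes it below -/
import Mathlib

section
/- Let p > 2 be a prime and n ≥ 0 an integer such that p divides n+1 (i.e., the last base-p digit of n+1 is 0). Then, as multisets of positive integers, ext(n) equals the multiset of elements of the set supp(n+1), each occurring with multiplicity one. -/
/-- `suppP p n` : for `n ≥ 0`, writing `n+1` in base `p` as
`a_j p^j + ... + a_0`, the set of integers
`a_j p^j ± a_{j-1} p^{j-1} ± ... ± a_0` over all choices of signs on the
lower digits.  By convention `suppP p (-1) = ∅` (and also for `n < 0`). -/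
def suppP (p : ℕ) (n : ℤ) : Finset ℤ :=
  if 0 ≤ n then
    let L := Nat.digits p (n.toNat + 1)
    let j := L.length - 1
    Finset.image
      (fun ε : Fin j → Bool =>
        (L.getD j 0 : ℤ) * (p : ℤ) ^ j +
          ∑ i : Fin j, (if ε i then (1 : ℤ) else -1) * (L.getD i 0 : ℤ) * (p : ℤ) ^ (i : ℕ))
      Finset.univ
  else ∅

/-- `extP p n` : the multiset consisting of `x+1` for each `x ∈ suppP p n`,
together with `x-1` for each `x ∈ suppP p n` with `x ≥ 2` (occurrences of `0`
are discarded). -/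
def extP (p : ℕ) (n : ℤ) : Multiset ℤ :=
  (suppP p n).val.map (fun x => x + 1) +
    ((suppP p n).val.filter (fun x => 2 ≤ x)).map (fun x => x - 1)

/-- the value function underlying `suppP` -/
def valF (p : ℕ) (L : List ℕ) (k : ℕ) (ε : Fin k → Bool) : ℤ :=
  (L.getD k 0 : ℤ) * (p : ℤ) ^ k +
    ∑ i : Fin k, (if ε i then (1 : ℤ) else -1) * (L.getD i 0 : ℤ) * (p : ℤ) ^ (i : ℕ)

lemma suppP_eq_image (p : ℕ) (n : ℤ) (hn : 0 ≤ n) (L : List ℕ)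
    (hL : Nat.digits p (n.toNat + 1) = L) :
    suppP p n = Finset.image (valF p L (L.length - 1)) Finset.univ := by
  subst hL
  simp only [suppP, if_pos hn]
  rfl

lemma valF_key (p : ℕ) (T : List ℕ) (k : ℕ) (hk : 0 < k) (ε : Fin k → Bool) :
    valF p (1 :: T) k ε = valF p (0 :: T) k ε + (if ε ⟨0, hk⟩ then 1 else -1) := by
  unfold valF
  have htop : ((1 :: T).getD k 0) = ((0 :: T).getD k 0) := by
    obtain ⟨k', rfl⟩ : ∃ k', k = k' + 1 := ⟨k - 1, by omega⟩
    simp [List.getD_cons_succ]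
  rw [htop]
  have hsum : (∑ i : Fin k, (if ε i then (1:ℤ) else -1) * ((1 :: T).getD i 0 : ℤ) * (p:ℤ) ^ (i:ℕ))
      - (∑ i : Fin k, (if ε i then (1:ℤ) else -1) * ((0 :: T).getD i 0 : ℤ) * (p:ℤ) ^ (i:ℕ))
      = (if ε ⟨0, hk⟩ then (1:ℤ) else -1) := by
    rw [← Finset.sum_sub_distrib]
    have hterm : ∀ i : Fin k,
        (if ε i then (1:ℤ) else -1) * ((1 :: T).getD i 0 : ℤ) * (p:ℤ) ^ (i:ℕ)
          - (if ε i then (1:ℤ) else -1) * ((0 :: T).getD i 0 : ℤ) * (p:ℤ) ^ (i:ℕ)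
        = if i = ⟨0, hk⟩ then (if ε ⟨0, hk⟩ then (1:ℤ) else -1) else 0 := by
      rintro ⟨iv, hiv⟩
      match iv with
      | 0 =>
        have h0 : (⟨0, hiv⟩ : Fin k) = ⟨0, hk⟩ := rfl
        rw [h0, if_pos rfl]
        simp [List.getD_cons_zero]
      | iv + 1 =>
        have hne : (⟨iv + 1, hiv⟩ : Fin k) ≠ ⟨0, hk⟩ := by simp [Fin.ext_iff]
        rw [if_neg hne]
        simp only [List.getD_cons_succ]
        ring
    rw [Finset.sum_congr rfl (fun i _ => hterm i), Finset.sum_ite_eq']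
    simp
  linarith

lemma valF_update (p : ℕ) (T : List ℕ) (k : ℕ) (hk : 0 < k) (ε : Fin k → Bool) (b : Bool) :
    valF p (0 :: T) k (Function.update ε ⟨0, hk⟩ b) = valF p (0 :: T) k ε := by
  unfold valF
  congr 1
  apply Finset.sum_congr rfl
  intro i _
  by_cases hi : i = ⟨0, hk⟩
  · subst hi; simp [List.getD_cons_zero]
  · rw [Function.update_of_ne hi]

lemma dvd_valF (p : ℕ) (T : List ℕ) (k : ℕ) (hk : 0 < k) (ε : Fin k → Bool) :
    (p : ℤ) ∣ valF p (0 :: T) k ε := by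
  unfold valF
  apply dvd_add
  · exact Dvd.dvd.mul_left (dvd_pow_self _ (by omega)) _
  · apply Finset.dvd_sum
    rintro ⟨iv, hiv⟩ _
    match iv with
    | 0 => simp [List.getD_cons_zero]
    | iv + 1 => exact Dvd.dvd.mul_left (dvd_pow_self _ (Nat.succ_ne_zero iv)) _

lemma one_le_valF (p : ℕ) (hp1 : 1 < p) (T : List ℕ) (k : ℕ) (hk : 0 < k)
    (hdig : ∀ i : ℕ, (0 :: T).getD i 0 < p) (htop : 1 ≤ (0 :: T).getD k 0)
    (ε : Fin k → Bool) : 1 ≤ valF p (0 :: T) k ε := by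
  unfold valF
  have hpk : (0:ℤ) < (p:ℤ) ^ k := pow_pos (by exact_mod_cast Nat.lt_of_lt_of_le Nat.zero_lt_one hp1.le) k
  have h1 : (p:ℤ) ^ k ≤ ((0 :: T).getD k 0 : ℤ) * (p:ℤ) ^ k := by
    have : (1:ℤ) ≤ ((0 :: T).getD k 0 : ℤ) := by exact_mod_cast htop
    nlinarith
  have hgeom : ∑ i ∈ Finset.range k, ((p:ℤ) - 1) * (p:ℤ) ^ i = (p:ℤ) ^ k - 1 := by
    rw [← Finset.mul_sum, mul_comm, geom_sum_mul]
  have h2 : -((p:ℤ) ^ k - 1) ≤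
      ∑ i : Fin k, (if ε i then (1:ℤ) else -1) * ((0 :: T).getD i 0 : ℤ) * (p:ℤ) ^ (i : ℕ) := by
    have hterm : ∀ i : Fin k, -(((p:ℤ) - 1) * (p:ℤ) ^ (i : ℕ)) ≤
        (if ε i then (1:ℤ) else -1) * ((0 :: T).getD i 0 : ℤ) * (p:ℤ) ^ (i : ℕ) := by
      intro i
      have hd0 : (0:ℤ) ≤ ((0 :: T).getD i 0 : ℤ) := by positivity
      have hdp : ((0 :: T).getD i 0 : ℤ) ≤ (p:ℤ) - 1 := by
        have := hdig i
        have : ((0 :: T).getD i 0 : ℤ) < (p:ℤ) := by exact_mod_cast this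
        linarith
      have hpi : (0:ℤ) < (p:ℤ) ^ (i : ℕ) := pow_pos (by exact_mod_cast Nat.lt_of_lt_of_le Nat.zero_lt_one hp1.le) _
      split_ifs with h <;> nlinarith
    calc -((p:ℤ) ^ k - 1) = ∑ i : Fin k, -(((p:ℤ) - 1) * (p:ℤ) ^ (i : ℕ)) := by
          rw [← hgeom, ← Fin.sum_univ_eq_sum_range (fun i => ((p:ℤ) - 1) * (p:ℤ) ^ i) k,
            ← Finset.sum_neg_distrib]
      _ ≤ _ := Finset.sum_le_sum (fun i _ => hterm i)
  linarith

/-- If `p > 2` is prime, `n ≥ 0` and `p ∣ n+1`, then, as multisets,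
`ext(n) = supp(n+1)`. -/
theorem ext_eq_of_dvd (p : ℕ) (hp : p.Prime) (hp2 : 2 < p) (n : ℤ) (hn : 0 ≤ n)
    (hdvd : (p : ℤ) ∣ n + 1) :
    extP p n = (suppP p (n + 1)).val := by
  have hp1 : 1 < p := hp.one_lt
  set m : ℕ := n.toNat + 1 with hmdef
  have hmn : ((m : ℕ) : ℤ) = n + 1 := by omega
  have hpm : p ∣ m := by
    have h : (p : ℤ) ∣ (m : ℤ) := by rw [hmn]; exact hdvd
    exact_mod_cast h
  have hmpos : 0 < m := by omega
  have hple : p ≤ m := Nat.le_of_dvd hmpos hpm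
  have hmodz : m % p = 0 := by
    obtain ⟨c, hc⟩ := hpm; rw [hc]; exact Nat.mul_mod_right p c
  set T : List ℕ := Nat.digits p (m / p) with hTdef
  have hTne : T ≠ [] := Nat.digits_ne_nil_iff_ne_zero.mpr (by
    have := Nat.div_pos hple (by omega); omega)
  have hL : Nat.digits p m = 0 :: T := by
    rw [Nat.digits_def' hp1 hmpos, hmodz]
  have hnd : ¬ p ∣ m + 1 := by
    intro h
    have h2 : p ∣ 1 := (Nat.dvd_add_right hpm).mp h
    have := Nat.le_of_dvd Nat.one_pos h2
    omega
  have hL' : Nat.digits p (m + 1) = 1 :: T := by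
    rw [Nat.digits_def' hp1 (by omega)]
    congr 1
    · rw [Nat.add_mod, hmodz, Nat.zero_add, Nat.mod_mod_of_dvd, Nat.mod_eq_of_lt (by omega)]
      exact dvd_refl p
    · rw [Nat.succ_div, if_neg hnd, Nat.add_zero]
  set k : ℕ := T.length with hkdef
  have hk : 0 < k := List.length_pos_iff.mpr hTne
  -- the two suppP sets as images
  have hS : suppP p n = Finset.image (valF p (0 :: T) k) Finset.univ := by
    have h := suppP_eq_image p n hn (0 :: T) (by rw [← hmdef, hL])
    simpa using h
  have hS' : suppP p (n + 1) = Finset.image (valF p (1 :: T) k) Finset.univ := by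
    have h1 : (n + 1).toNat + 1 = m + 1 := by omega
    have h := suppP_eq_image p (n + 1) (by omega) (1 :: T) (by rw [h1, hL'])
    simpa using h
  -- digit bounds
  have hmemlist : ∀ d ∈ (0 :: T), d < p := by
    rw [← hL]
    exact fun d hd => Nat.digits_lt_base hp1 hd
  have hdig : ∀ i : ℕ, (0 :: T).getD i 0 < p := by
    intro i
    rcases lt_or_ge i (0 :: T).length with h | h
    · rw [List.getD_eq_getElem _ _ h]
      exact hmemlist _ (List.getElem_mem h)
    · rw [List.getD_eq_default _ _ h]; omega
  have htop : 1 ≤ (0 :: T).getD k 0 := by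
    have hgl := Nat.getLast_digit_ne_zero p (show m ≠ 0 by omega)
    rw [List.getLast_eq_getElem] at hgl
    simp only [hL] at hgl
    have hlen : k < (0 :: T).length := by simp [hkdef]
    rw [List.getD_eq_getElem _ _ hlen]
    exact Nat.one_le_iff_ne_zero.mpr hgl
  -- properties of elements of suppP p n
  have hmem : ∀ x ∈ Finset.image (valF p (0 :: T) k) Finset.univ,
      (p : ℤ) ∣ x ∧ 1 ≤ x := by
    intro x hx
    obtain ⟨ε, -, rfl⟩ := Finset.mem_image.mp hx
    exact ⟨dvd_valF p T k hk ε, one_le_valF p hp1 T k hk hdig htop ε⟩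
  have hxp : ∀ x ∈ Finset.image (valF p (0 :: T) k) Finset.univ, (p : ℤ) ≤ x := by
    intro x hx
    obtain ⟨h1, h2⟩ := hmem x hx
    exact Int.le_of_dvd (by omega) h1
  -- the image equality
  set S : Finset ℤ := Finset.image (valF p (0 :: T) k) Finset.univ with hSdef
  have himg : Finset.image (valF p (1 :: T) k) Finset.univ
      = S.image (fun x => x + 1) ∪ S.image (fun x => x - 1) := by
    ext x
    simp only [Finset.mem_union, Finset.mem_image, Finset.mem_univ, true_and, hSdef,
      exists_exists_eq_and]
    constructor
    · rintro ⟨ε, rfl⟩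
      rw [valF_key p T k hk ε]
      by_cases h : ε ⟨0, hk⟩
      · left; exact ⟨ε, by rw [if_pos h]⟩
      · right; exact ⟨ε, by rw [if_neg h]; ring⟩
    · rintro (⟨ε, rfl⟩ | ⟨ε, rfl⟩)
      · refine ⟨Function.update ε ⟨0, hk⟩ true, ?_⟩
        rw [valF_key p T k hk, valF_update p T k hk, Function.update_self, if_pos rfl]
      · refine ⟨Function.update ε ⟨0, hk⟩ false, ?_⟩
        rw [valF_key p T k hk, valF_update p T k hk, Function.update_self,
          if_neg (by simp)]
        ring
  -- disjointness
  have hdisj : Disjoint (S.image (fun x => x + 1)) (S.image (fun x => x - 1)) := by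
    rw [Finset.disjoint_left]
    rintro a ha hb
    obtain ⟨x, hx, rfl⟩ := Finset.mem_image.mp ha
    obtain ⟨y, hy, hxy⟩ := Finset.mem_image.mp hb
    have hdx : (p : ℤ) ∣ x := (hmem x hx).1
    have hdy : (p : ℤ) ∣ y := (hmem y hy).1
    have h2 : (p : ℤ) ∣ 2 := by
      have : y - x = 2 := by omega
      have := dvd_sub hdy hdx
      rwa [‹y - x = 2›] at this
    have := Int.le_of_dvd (by norm_num) h2
    omega
  -- assemble
  rw [extP, hS, hS', himg, ← Finset.disjUnion_eq_union _ _ hdisj]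
  have hfilter : Multiset.filter (fun x => 2 ≤ x) S.val = S.val := by
    rw [Multiset.filter_eq_self]
    intro a ha
    have := hxp a (Finset.mem_val.mp ha)
    omega
  rw [hfilter]
  have e1 : (S.image (fun x => x + 1)).val = S.val.map (fun x => x + 1) :=
    Finset.image_val_of_injOn (fun a _ b _ h => by omega)
  have e2 : (S.image (fun x => x - 1)).val = S.val.map (fun x => x - 1) :=
    Finset.image_val_of_injOn (fun a _ b _ h => by omega)
  show S.val.map (fun x => x + 1) + S.val.map (fun x => x - 1)
    = (S.image (fun x => x + 1)).val + (S.image (fun x => x - 1)).val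
  rw [e1, e2]
end

section
/- Let p > 2 be a prime and n ≥ 0 an integer with n+1 ≡ 1 (mod p). Then, as multisets of positive integers, ext(n) = supp(n+1) + supp(n−1) + supp(n−1), i.e., ext(n) consists of the elements of supp(n+1) together with the elements of supp(n−1), each element of supp(n−1) taken with multiplicity two (with the convention supp(−1) = ∅, which applies when n = 0). -/
def sImg (p : ℕ) (L : List ℕ) : Finset ℤ :=
  Finset.image
    (fun ε : Fin (L.length - 1) → Bool =>
      (L.getD (L.length - 1) 0 : ℤ) * (p : ℤ) ^ (L.length - 1) +
        ∑ i : Fin (L.length - 1),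
          (if ε i then (1 : ℤ) else -1) * (L.getD (i : ℕ) 0 : ℤ) * (p : ℤ) ^ (i : ℕ))
    Finset.univ

lemma suppP_of_nonneg (p : ℕ) (n : ℤ) (hn : 0 ≤ n) :
    suppP p n = sImg p (Nat.digits p (n.toNat + 1)) := by
  unfold suppP sImg
  rw [if_pos hn]

lemma suppP_of_neg (p : ℕ) (n : ℤ) (hn : ¬ 0 ≤ n) : suppP p n = ∅ := by
  unfold suppP; rw [if_neg hn]

lemma sImg_singleton (p d : ℕ) : sImg p [d] = {(d : ℤ)} := by
  unfold sImg
  simp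

lemma sImg_cons_eq (p c : ℕ) (M : List ℕ) :
    sImg p (c :: M) =
      Finset.image
        (fun ε : Fin M.length → Bool =>
          ((c :: M).getD M.length 0 : ℤ) * (p : ℤ) ^ M.length +
            ∑ i : Fin M.length,
              (if ε i then (1 : ℤ) else -1) * ((c :: M).getD (i : ℕ) 0 : ℤ) * (p : ℤ) ^ (i : ℕ))
        Finset.univ := rfl

lemma sImg_cons (p c : ℕ) (M : List ℕ) (hM : M ≠ []) :
    sImg p (c :: M) =
      (sImg p (0 :: M)).image (· + (c : ℤ)) ∪ (sImg p (0 :: M)).image (· - (c : ℤ)) := by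
  have hm : 0 < M.length := List.length_pos_iff.mpr hM
  obtain ⟨k, hk⟩ : ∃ k, M.length = k + 1 := ⟨M.length - 1, by omega⟩
  rw [sImg_cons_eq p c M, sImg_cons_eq p 0 M]
  set i0 : Fin M.length := ⟨0, hm⟩ with hi0
  have htop : ((c :: M).getD M.length 0 : ℤ) = ((0 :: M).getD M.length 0 : ℤ) := by
    rw [hk, List.getD_cons_succ, List.getD_cons_succ]
  have hkey : ∀ (d : ℕ) (ε : Fin M.length → Bool),
      (∑ i : Fin M.length,
        (if ε i then (1 : ℤ) else -1) * ((d :: M).getD (i : ℕ) 0 : ℤ) * (p : ℤ) ^ (i : ℕ))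
      = (if ε i0 then (d : ℤ) else -(d : ℤ)) +
        (∑ i : Fin M.length,
          (if ε i then (1 : ℤ) else -1) * ((0 :: M).getD (i : ℕ) 0 : ℤ) * (p : ℤ) ^ (i : ℕ)) := by
    intro d ε
    rw [← Finset.add_sum_erase _ _ (Finset.mem_univ i0),
        ← Finset.add_sum_erase _ _ (Finset.mem_univ i0)]
    have hrest : ∀ i ∈ Finset.univ.erase i0,
        (if ε i then (1 : ℤ) else -1) * ((d :: M).getD (i : ℕ) 0 : ℤ) * (p : ℤ) ^ (i : ℕ)
        = (if ε i then (1 : ℤ) else -1) * ((0 :: M).getD (i : ℕ) 0 : ℤ) * (p : ℤ) ^ (i : ℕ) := by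
      intro i hi
      have hne : (i : ℕ) ≠ 0 := fun h0 => (Finset.mem_erase.mp hi).1 (Fin.ext h0)
      obtain ⟨l, hl⟩ : ∃ l, (i : ℕ) = l + 1 := ⟨(i : ℕ) - 1, by omega⟩
      rw [hl, List.getD_cons_succ, List.getD_cons_succ]
    rw [Finset.sum_congr rfl hrest]
    have h1 : ((d :: M).getD ((i0 : Fin M.length) : ℕ) 0 : ℤ) = (d : ℤ) := by
      simp [hi0]
    have h2 : ((0 :: M).getD ((i0 : Fin M.length) : ℕ) 0 : ℤ) = 0 := by
      simp [hi0]
    rw [h1, h2]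
    by_cases h : ε i0 = true <;> simp [h] <;> ring
  have hupd : ∀ (ε : Fin M.length → Bool) (b : Bool),
      (∑ i : Fin M.length,
        (if (Function.update ε i0 b) i then (1 : ℤ) else -1) *
          ((0 :: M).getD (i : ℕ) 0 : ℤ) * (p : ℤ) ^ (i : ℕ))
      = (∑ i : Fin M.length,
        (if ε i then (1 : ℤ) else -1) * ((0 :: M).getD (i : ℕ) 0 : ℤ) * (p : ℤ) ^ (i : ℕ)) := by
    intro ε b
    apply Finset.sum_congr rfl
    intro i _
    by_cases hii : i = i0
    · subst hii
      have h2 : ((0 :: M).getD ((i0 : Fin M.length) : ℕ) 0 : ℤ) = 0 := by simp [hi0]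
      rw [h2]; ring
    · rw [Function.update_of_ne hii]
  ext x
  simp only [Finset.mem_image, Finset.mem_union, Finset.mem_univ, true_and]
  constructor
  · rintro ⟨ε, rfl⟩
    by_cases h : ε i0 = true
    · exact Or.inl ⟨_, ⟨ε, rfl⟩, by rw [htop, hkey c ε, h]; simp; ring⟩
    · exact Or.inr ⟨_, ⟨ε, rfl⟩, by rw [htop, hkey c ε]; simp [h]; ring⟩
  · rintro (⟨y, ⟨ε, rfl⟩, rfl⟩ | ⟨y, ⟨ε, rfl⟩, rfl⟩)
    · exact ⟨Function.update ε i0 true, by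
        rw [htop, hkey c _, hupd ε true, Function.update_self]; simp; ring⟩
    · exact ⟨Function.update ε i0 false, by
        rw [htop, hkey c _, hupd ε false, Function.update_self]; simp; ring⟩

lemma getD_lt (p : ℕ) (hp : 0 < p) (L : List ℕ) (h : ∀ x ∈ L, x < p) (i : ℕ) :
    L.getD i 0 < p := by
  rcases lt_or_ge i L.length with h' | h'
  · rw [List.getD_eq_getElem L 0 h']
    exact h _ (List.getElem_mem h')
  · rw [List.getD_eq_default L 0 h']
    exact hp

lemma sImg_zero_cons_props (p q : ℕ) (hp2 : 2 < p) (hq : 0 < q) (t : ℤ)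
    (ht : t ∈ sImg p (0 :: Nat.digits p q)) : (p : ℤ) ∣ t ∧ (p : ℤ) ≤ t := by
  set M := Nat.digits p q with hMdef
  have hM : M ≠ [] := Nat.digits_ne_nil_iff_ne_zero.mpr hq.ne'
  have hm : 0 < M.length := List.length_pos_iff.mpr hM
  have hlt : ∀ x ∈ (0 :: M), x < p := by
    intro x hx
    rcases List.mem_cons.mp hx with rfl | hx
    · omega
    · exact Nat.digits_lt_base (by omega) hx
  rw [sImg_cons_eq] at ht
  simp only [Finset.mem_image, Finset.mem_univ, true_and] at ht
  obtain ⟨ε, rfl⟩ := ht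
  have htop1 : 1 ≤ (0 :: M).getD M.length 0 := by
    have heq : (0 :: M).getD M.length 0 = M.getLast hM := by
      obtain ⟨k, hk⟩ : ∃ k, M.length = k + 1 := ⟨M.length - 1, by omega⟩
      have h1 : (0 :: M).getD M.length 0 = M.getD (M.length - 1) 0 := by
        rw [hk, List.getD_cons_succ]
        norm_num
      rw [h1, List.getD_eq_getElem M 0 (by omega), List.getLast_eq_getElem]
    rw [heq]
    exact Nat.one_le_iff_ne_zero.mpr (Nat.getLast_digit_ne_zero p hq.ne')
  have hdvd : (p : ℤ) ∣
      ((0 :: M).getD M.length 0 : ℤ) * (p : ℤ) ^ M.length +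
        ∑ i : Fin M.length,
          (if ε i then (1 : ℤ) else -1) * ((0 :: M).getD (i : ℕ) 0 : ℤ) * (p : ℤ) ^ (i : ℕ) := by
    apply dvd_add
    · apply Dvd.dvd.mul_left
      obtain ⟨k, hk⟩ : ∃ k, M.length = k + 1 := ⟨M.length - 1, by omega⟩
      rw [hk, pow_succ']
      exact Dvd.dvd.mul_right dvd_rfl _
    · apply Finset.dvd_sum
      intro i _
      rcases Nat.eq_zero_or_pos (i : ℕ) with h0 | h0
      · rw [h0]
        simp [List.getD_cons_zero]
      · obtain ⟨l, hl⟩ : ∃ l, (i : ℕ) = l + 1 := ⟨(i : ℕ) - 1, by omega⟩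
        rw [hl, pow_succ']
        exact Dvd.dvd.mul_left (Dvd.dvd.mul_right dvd_rfl _) _
  have hpos : (0 : ℤ) <
      ((0 :: M).getD M.length 0 : ℤ) * (p : ℤ) ^ M.length +
        ∑ i : Fin M.length,
          (if ε i then (1 : ℤ) else -1) * ((0 :: M).getD (i : ℕ) 0 : ℤ) * (p : ℤ) ^ (i : ℕ) := by
    have hbound : ∀ i : Fin M.length,
        -(((p : ℤ) - 1) * (p : ℤ) ^ (i : ℕ)) ≤
          (if ε i then (1 : ℤ) else -1) * ((0 :: M).getD (i : ℕ) 0 : ℤ) * (p : ℤ) ^ (i : ℕ) := by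
      intro i
      have hd : ((0 :: M).getD (i : ℕ) 0 : ℤ) ≤ (p : ℤ) - 1 := by
        have := getD_lt p (by omega) (0 :: M) hlt (i : ℕ)
        push_cast
        omega
      have hd0 : (0 : ℤ) ≤ ((0 :: M).getD (i : ℕ) 0 : ℤ) := Int.natCast_nonneg _
      have hppow : (0 : ℤ) < (p : ℤ) ^ (i : ℕ) := by positivity
      by_cases h : ε i = true
      · rw [if_pos h]; nlinarith
      · rw [if_neg h]; nlinarith
    have h2 : (∑ i : Fin M.length, -(((p : ℤ) - 1) * (p : ℤ) ^ (i : ℕ)))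
        = -((p : ℤ) ^ M.length - 1) := by
      rw [Fin.sum_univ_eq_sum_range (fun i => -(((p : ℤ) - 1) * (p : ℤ) ^ i))]
      rw [Finset.sum_neg_distrib, ← Finset.mul_sum, mul_comm ((p : ℤ) - 1),
        geom_sum_mul]
    have hsum : -((p : ℤ) ^ M.length - 1) ≤
        ∑ i : Fin M.length,
          (if ε i then (1 : ℤ) else -1) * ((0 :: M).getD (i : ℕ) 0 : ℤ) * (p : ℤ) ^ (i : ℕ) := by
      rw [← h2]
      exact Finset.sum_le_sum (fun i _ => hbound i)
    have htoppow : (p : ℤ) ^ M.length ≤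
        ((0 :: M).getD M.length 0 : ℤ) * (p : ℤ) ^ M.length := by
      have h1 : (1 : ℤ) ≤ ((0 :: M).getD M.length 0 : ℤ) := by exact_mod_cast htop1
      nlinarith [pow_pos (show (0:ℤ) < p by positivity) M.length]
    linarith
  exact ⟨hdvd, Int.le_of_dvd hpos hdvd⟩

lemma disjUnion_val' (s t : Finset ℤ) (h : Disjoint s t) :
    (s.disjUnion t h).val = s.val + t.val := rfl

/-- If `p > 2` is prime, `n ≥ 0` and `n+1 ≡ 1 (mod p)`, then, as multisets,
`ext(n) = supp(n+1) + supp(n-1) + supp(n-1)`. -/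
theorem ext_eq_of_mod_eq_one (p : ℕ) (hp : p.Prime) (hp2 : 2 < p) (n : ℤ) (hn : 0 ≤ n)
    (hmod : (n + 1) % (p : ℤ) = 1) :
    extP p n = (suppP p (n + 1)).val + (suppP p (n - 1)).val + (suppP p (n - 1)).val := by
  have hb : 1 < p := by omega
  rcases eq_or_lt_of_le hn with heq | hpos
  · -- case n = 0
    have heq0 : n = 0 := heq.symm
    subst heq0
    have hd1 : Nat.digits p 1 = [1] := by
      rw [Nat.digits_def' hb one_pos, Nat.mod_eq_of_lt (by omega),
        Nat.div_eq_of_lt (by omega), Nat.digits_zero]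
    have hd2 : Nat.digits p 2 = [2] := by
      rw [Nat.digits_def' hb (by omega), Nat.mod_eq_of_lt (by omega),
        Nat.div_eq_of_lt (by omega), Nat.digits_zero]
    have hs0 : suppP p 0 = ({1} : Finset ℤ) := by
      rw [suppP_of_nonneg p 0 le_rfl]
      norm_num [hd1, sImg_singleton]
    have hs1 : suppP p (0 + 1) = ({2} : Finset ℤ) := by
      rw [suppP_of_nonneg p (0 + 1) (by norm_num)]
      norm_num [hd2, sImg_singleton]
    have hsm : suppP p (0 - 1) = (∅ : Finset ℤ) := suppP_of_neg p _ (by norm_num)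
    unfold extP
    rw [hs0, hs1, hsm]
    decide
  · -- case n ≥ 1
    have h1n : 1 ≤ n := hpos
    have hNn : ((n.toNat : ℤ)) = n := Int.toNat_of_nonneg hn
    set N := n.toNat with hN
    have hdvd : (p : ℤ) ∣ n := by
      refine ⟨(n + 1) / p, ?_⟩
      have := Int.emod_add_mul_ediv (n + 1) (p : ℤ)
      linarith
    have hdvdN : p ∣ N := by
      have h : (p : ℤ) ∣ (N : ℤ) := by rw [hNn]; exact hdvd
      exact_mod_cast h
    obtain ⟨q, hq⟩ := hdvdN
    have hN1 : 1 ≤ N := by omega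
    have hq0 : 0 < q := by
      rcases Nat.eq_zero_or_pos q with h0 | h0
      · rw [h0, Nat.mul_zero] at hq; omega
      · exact h0
    -- digit identities
    have hd1 : Nat.digits p (N + 1) = 1 :: Nat.digits p q := by
      rw [Nat.digits_def' hb (by omega)]
      congr 1
      · rw [hq, Nat.mul_add_mod]
        exact Nat.mod_eq_of_lt (by omega)
      · rw [hq, Nat.mul_add_div (by omega), Nat.div_eq_of_lt (by omega), Nat.add_zero]
    have hd2 : Nat.digits p (N + 2) = 2 :: Nat.digits p q := by
      rw [Nat.digits_def' hb (by omega)]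
      congr 1
      · rw [hq, Nat.mul_add_mod]
        exact Nat.mod_eq_of_lt (by omega)
      · rw [hq, Nat.mul_add_div (by omega), Nat.div_eq_of_lt (by omega), Nat.add_zero]
    have hd0 : Nat.digits p N = 0 :: Nat.digits p q := by
      rw [Nat.digits_def' hb (by omega)]
      congr 1
      · rw [hq, Nat.mul_mod_right]
      · rw [hq, Nat.mul_div_cancel_left q (by omega)]
    set M := Nat.digits p q with hMdef
    have hM : M ≠ [] := Nat.digits_ne_nil_iff_ne_zero.mpr hq0.ne'
    set T := sImg p (0 :: M) with hTdef
    -- supp identifications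
    have hsupp_n : suppP p n = sImg p (1 :: M) := by
      rw [suppP_of_nonneg p n hn, show n.toNat + 1 = N + 1 from rfl, hd1]
    have hsupp_n1 : suppP p (n + 1) = sImg p (2 :: M) := by
      rw [suppP_of_nonneg p (n + 1) (by omega), show (n + 1).toNat + 1 = N + 2 by omega, hd2]
    have hsupp_nm : suppP p (n - 1) = T := by
      rw [suppP_of_nonneg p (n - 1) (by omega), show (n - 1).toNat + 1 = N by omega, hd0]
    have hc1 : sImg p (1 :: M) = T.image (· + (1 : ℤ)) ∪ T.image (· - (1 : ℤ)) := by
      have h := sImg_cons p 1 M hM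
      rw [Nat.cast_one] at h
      exact h
    have hc2 : sImg p (2 :: M) = T.image (· + (2 : ℤ)) ∪ T.image (· - (2 : ℤ)) := by
      have h := sImg_cons p 2 M hM
      rw [Nat.cast_two] at h
      exact h
    have hT : ∀ t ∈ T, (p : ℤ) ∣ t ∧ (p : ℤ) ≤ t :=
      fun t ht => sImg_zero_cons_props p q hp2 hq0 t ht
    -- disjointness
    have hdisj : ∀ c : ℤ, ¬ (p : ℤ) ∣ 2 * c →
        Disjoint (T.image (· + c)) (T.image (· - c)) := by
      intro c hc
      rw [Finset.disjoint_left]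
      rintro x hx hx'
      simp only [Finset.mem_image] at hx hx'
      obtain ⟨t, ht, rfl⟩ := hx
      obtain ⟨t', ht', he⟩ := hx'
      apply hc
      have h1 := (hT t ht).1
      have h2 := (hT t' ht').1
      have h3 : t' - t = 2 * c := by linarith
      rw [← h3]
      exact dvd_sub h2 h1
    have hnd1 : ¬ (p : ℤ) ∣ 2 * 1 := by
      intro h
      have h' : p ∣ 2 := by exact_mod_cast h
      have := Nat.le_of_dvd (by norm_num) h'
      omega
    have hnd2 : ¬ (p : ℤ) ∣ 2 * 2 := by
      intro h
      have h' : p ∣ 4 := by exact_mod_cast h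
      have := Nat.le_of_dvd (by norm_num) h'
      interval_cases p
      · norm_num at h'
      · norm_num at hp
    -- val computations
    have himg_add : ∀ (c : ℤ) (s : Finset ℤ), (s.image (· + c)).val = s.val.map (· + c) :=
      fun c s => Finset.image_val_of_injOn (fun a _ b _ h => by simpa using h)
    have himg_sub : ∀ (c : ℤ) (s : Finset ℤ), (s.image (· - c)).val = s.val.map (· - c) :=
      fun c s => Finset.image_val_of_injOn (fun a _ b _ h => by simpa using h)
    have hval1 : (suppP p n).val = T.val.map (· + (1 : ℤ)) + T.val.map (· - (1 : ℤ)) := by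
      rw [hsupp_n, hc1, ← Finset.disjUnion_eq_union _ _ (hdisj 1 hnd1),
        disjUnion_val', himg_add, himg_sub]
    have hval2 : (suppP p (n + 1)).val = T.val.map (· + (2 : ℤ)) + T.val.map (· - (2 : ℤ)) := by
      rw [hsupp_n1, hc2, ← Finset.disjUnion_eq_union _ _ (hdisj 2 hnd2),
        disjUnion_val', himg_add, himg_sub]
    have hp3 : (3 : ℤ) ≤ (p : ℤ) := by exact_mod_cast hp2
    have hfilter : (T.val.map (· + (1 : ℤ)) + T.val.map (· - (1 : ℤ))).filter (fun x => 2 ≤ x)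
        = T.val.map (· + (1 : ℤ)) + T.val.map (· - (1 : ℤ)) := by
      rw [Multiset.filter_eq_self]
      intro x hx
      rw [Multiset.mem_add] at hx
      rcases hx with hx | hx <;> obtain ⟨t, ht, rfl⟩ := Multiset.mem_map.mp hx <;>
        have h2 := (hT t (Finset.mem_val.mp ht)).2 <;>
        show (2 : ℤ) ≤ _ <;> linarith
    unfold extP
    rw [hval1, hval2, hsupp_nm, hfilter]
    rw [Multiset.map_add, Multiset.map_add]
    have e1 : (T.val.map (· + (1 : ℤ))).map (· + (1 : ℤ)) = T.val.map (· + (2 : ℤ)) := by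
      rw [Multiset.map_map]
      apply Multiset.map_congr rfl
      intro x _
      simp only [Function.comp_apply]
      ring
    have e2 : (T.val.map (· - (1 : ℤ))).map (· + (1 : ℤ)) = T.val := by
      rw [Multiset.map_map]
      have h := Multiset.map_congr (f := (· + (1 : ℤ)) ∘ (· - (1 : ℤ))) (g := id) rfl
        (fun x (_ : x ∈ T.val) => by simp)
      rw [h, Multiset.map_id]
    have e3 : (T.val.map (· + (1 : ℤ))).map (· - (1 : ℤ)) = T.val := by
      rw [Multiset.map_map]
      have h := Multiset.map_congr (f := (· - (1 : ℤ)) ∘ (· + (1 : ℤ))) (g := id) rfl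
        (fun x (_ : x ∈ T.val) => by simp)
      rw [h, Multiset.map_id]
    have e4 : (T.val.map (· - (1 : ℤ))).map (· - (1 : ℤ)) = T.val.map (· - (2 : ℤ)) := by
      rw [Multiset.map_map]
      apply Multiset.map_congr rfl
      intro x _
      simp only [Function.comp_apply]
      ring
    rw [e1, e2, e3, e4]
    abel
end

section
/- Let p > 2 be a prime and n ≥ 0 an integer such that the residue a_0 of n+1 modulo p satisfies 1 < a_0 < p−1. Then, as multisets of positive integers, ext(n) = supp(n+1) + supp(n−1). -/
/-!
Write `n + 1 = p q + a` with `a` its last base-`p` digit. Peeling off that digit gives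
`supp(n) = {p x + a} ⊎ {p x - a}` over `x ∈ supp(q - 1)`, a disjoint union as soon as `p ∤ 2a`.
When `2 ≤ a ≤ p - 2`, the numbers `n + 2` and `n` (indexing `supp(n + 1)` and `supp(n - 1)`) have
the same `q` and last digits `a ± 1`, the elements `p x ± a ≥ p - a` of `supp(n)` are all at least `2`, and shifting `p x ± a` by `±1`
yields exactly the elements `p x ± (a ± 1)` of `supp(n + 1)` and `supp(n - 1)`.
-/

def signedDigitSum (p : ℕ) (L : List ℕ) (j : ℕ) (ε : Fin j → Bool) : ℤ :=
  (L.getD j 0 : ℤ) * (p : ℤ) ^ j +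
    ∑ i : Fin j, (if ε i then (1 : ℤ) else -1) * (L.getD i 0 : ℤ) * (p : ℤ) ^ (i : ℕ)

lemma suppP_eq_image_signedDigitSum (p : ℕ) {n : ℤ} (hn : 0 ≤ n) :
    suppP p n = Finset.univ.image (signedDigitSum p (Nat.digits p (n.toNat + 1))
      ((Nat.digits p (n.toNat + 1)).length - 1)) := by
  rw [suppP, if_pos hn]
  rfl

lemma signedDigitSum_cons (p a : ℕ) (L : List ℕ) (j : ℕ) (b : Bool) (δ : Fin j → Bool) :
    signedDigitSum p (a :: L) (j + 1) (Fin.cons b δ) =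
      p * signedDigitSum p L j δ + (if b then 1 else -1) * a := by
  simp only [signedDigitSum, Fin.sum_univ_succ, Fin.cons_zero, Fin.cons_succ, Fin.val_zero,
    Fin.val_succ, List.getD_cons_zero, List.getD_cons_succ, pow_succ]
  rw [mul_add, Finset.mul_sum]
  ring_nf

lemma image_signedDigitSum_cons (p a : ℕ) (L : List ℕ) (j : ℕ) :
    Finset.univ.image (signedDigitSum p (a :: L) (j + 1)) =
      (Finset.univ.image (signedDigitSum p L j)).image ((p : ℤ) * · + a) ∪
        (Finset.univ.image (signedDigitSum p L j)).image ((p : ℤ) * · - a) := by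
  ext x
  simp only [Finset.mem_union, Finset.mem_image, Finset.mem_univ, true_and,
    exists_exists_eq_and]
  constructor
  · rintro ⟨ε, rfl⟩
    rw [← Fin.cons_self_tail ε, signedDigitSum_cons]
    cases ε 0
    · exact Or.inr ⟨Fin.tail ε, by simp [sub_eq_add_neg]⟩
    · exact Or.inl ⟨Fin.tail ε, by simp⟩
  · rintro (⟨δ, rfl⟩ | ⟨δ, rfl⟩)
    · exact ⟨Fin.cons true δ, by simp [signedDigitSum_cons]⟩
    · exact ⟨Fin.cons false δ, by simp [signedDigitSum_cons, sub_eq_add_neg]⟩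

lemma suppP_eq_union_of_add_one_eq {p : ℕ} (hp : 1 < p) {n q a : ℤ} (hq : 0 < q) (ha : 0 ≤ a)
    (hap : a < p) (h : n + 1 = p * q + a) :
    suppP p n = (suppP p (q - 1)).image ((p : ℤ) * · + a) ∪
      (suppP p (q - 1)).image ((p : ℤ) * · - a) := by
  lift q to ℕ using hq.le
  lift a to ℕ using ha
  have hn : 0 ≤ n := by nlinarith
  have hdigits : Nat.digits p (n.toNat + 1) = a :: Nat.digits p q := by
    rw [← Nat.digits_add p hp a q (by exact_mod_cast hap) (Or.inr (by omega))]
    congr 1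
    zify
    rw [Int.toNat_of_nonneg hn]
    linarith
  obtain ⟨j, hj⟩ : ∃ j, (Nat.digits p q).length = j + 1 :=
    Nat.exists_eq_add_one_of_ne_zero
      (List.length_pos_iff.2 (Nat.digits_ne_nil_iff_ne_zero.2 (show q ≠ 0 by omega))).ne'
  rw [suppP_eq_image_signedDigitSum p hn,
    suppP_eq_image_signedDigitSum p (by omega : (0 : ℤ) ≤ q - 1), hdigits, show ((q : ℤ) - 1).toNat + 1 = q by omega, List.length_cons, hj]
  exact image_signedDigitSum_cons p a _ j

lemma suppP_eq_singleton {p : ℕ} {n : ℤ} (hn : 0 ≤ n) (hnp : n + 1 < p) :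
    suppP p n = {n + 1} := by
  rw [suppP, if_pos hn, Nat.digits_of_lt p _ (by omega) (by omega)]
  simp [hn]

lemma suppP_pos {p : ℕ} (hp : 1 < p) (n : ℤ) : ∀ x ∈ suppP p n, 0 < x := by
  induction hm : n.toNat using Nat.strong_induction_on generalizing n with
  | _ m ih =>
  by_cases hn : 0 ≤ n
  swap
  · simp [suppP, hn]
  have hp0 : (0 : ℤ) < p := by omega
  set a := (n + 1) % (p : ℤ)
  set q := (n + 1) / (p : ℤ)
  have hdiv : n + 1 = p * q + a := (Int.mul_ediv_add_emod _ _).symm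
  have ha : 0 ≤ a := Int.emod_nonneg _ hp0.ne'
  have hap : a < p := Int.emod_lt_of_pos _ hp0
  have hq : 0 ≤ q := Int.ediv_nonneg (by omega) hp0.le
  obtain hq | hq := hq.eq_or_lt
  · rw [← hq, mul_zero, zero_add] at hdiv
    rw [suppP_eq_singleton hn (by omega)]
    simp only [Finset.mem_singleton, forall_eq]
    omega
  · intro x hx
    rw [suppP_eq_union_of_add_one_eq hp hq ha hap hdiv] at hx
    have hqn : (q - 1).toNat < m := by
      have : 2 * q ≤ p * q := mul_le_mul_of_nonneg_right (by omega) hq.le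
      omega
    simp only [Finset.mem_union, Finset.mem_image] at hx
    rcases hx with ⟨y, hy, rfl⟩ | ⟨y, hy, rfl⟩ <;> have := ih _ hqn _ rfl y hy
    · positivity
    · nlinarith

lemma disjoint_image_mul_add_image_mul_sub {p a : ℤ} (hpa : ¬ p ∣ 2 * a) (s : Finset ℤ) :
    Disjoint (s.image (p * · + a)) (s.image (p * · - a)) := by
  rw [Finset.disjoint_left]
  rintro _ hx hx'
  obtain ⟨x, -, rfl⟩ := Finset.mem_image.1 hx
  obtain ⟨y, -, hxy⟩ := Finset.mem_image.1 hx'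
  exact hpa ⟨y - x, by linarith⟩

lemma suppP_val_of_add_one_eq {p : ℕ} (hp : 1 < p) {n q a : ℤ} (hq : 0 < q) (ha : 0 ≤ a)
    (hap : a < p) (hpa : ¬ (p : ℤ) ∣ 2 * a) (h : n + 1 = p * q + a) :
    (suppP p n).val = (suppP p (q - 1)).val.map ((p : ℤ) * · + a) +
      (suppP p (q - 1)).val.map ((p : ℤ) * · - a) := by
  have hmul : Function.Injective ((p : ℤ) * ·) := mul_right_injective₀ (by omega)
  rw [suppP_eq_union_of_add_one_eq hp hq ha hap h,
    ← Finset.disjUnion_eq_union _ _ (disjoint_image_mul_add_image_mul_sub hpa _),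
    Finset.disjUnion_val,
    Finset.image_val_of_injOn (f := ((p : ℤ) * · + a)) ((add_left_injective a).comp hmul).injOn,
    Finset.image_val_of_injOn (f := ((p : ℤ) * · - a)) ((sub_left_injective (b := a)).comp hmul).injOn]

lemma extP_eq_of_two_le {p : ℕ} {n : ℤ} (h : ∀ x ∈ suppP p n, 2 ≤ x) :
    extP p n = (suppP p n).val.map (· + 1) + (suppP p n).val.map (· - 1) := by
  rw [extP, Multiset.filter_eq_self.2 h]

lemma not_prime_dvd_two_mul {p : ℕ} (hp : p.Prime) (hp2 : 2 < p) {b : ℤ} (hb0 : 0 < b)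
    (hbp : b < p) : ¬ (p : ℤ) ∣ 2 * b := by
  intro hdvd
  rcases (Nat.prime_iff_prime_int.1 hp).dvd_mul.1 hdvd with h | h
  · have := Int.le_of_dvd two_pos h
    omega
  · have := Int.le_of_dvd hb0 h
    omega

/-- If `p > 2` is prime, `n ≥ 0` and the last base-`p` digit `a₀` of `n+1`
satisfies `1 < a₀ < p-1`, then, as multisets, `ext(n) = supp(n+1) + supp(n-1)`. -/
theorem ext_eq_of_middle_digit (p : ℕ) (hp : p.Prime) (hp2 : 2 < p) (n : ℤ) (hn : 0 ≤ n)
    (h1 : 1 < (n + 1) % (p : ℤ)) (h2 : (n + 1) % (p : ℤ) < (p : ℤ) - 1) :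
    extP p n = (suppP p (n + 1)).val + (suppP p (n - 1)).val := by
  set a := (n + 1) % (p : ℤ)
  set q := (n + 1) / (p : ℤ)
  have hdiv : n + 1 = p * q + a := (Int.mul_ediv_add_emod _ _).symm
  have hq : 0 ≤ q := Int.ediv_nonneg (by omega) (by omega)
  obtain hq | hq := hq.eq_or_lt
  · rw [← hq, mul_zero, zero_add] at hdiv
    have hsingle : suppP p n = {n + 1} := suppP_eq_singleton hn (by omega)
    rw [extP_eq_of_two_le (by simp [hsingle]; omega), hsingle,
      suppP_eq_singleton (by omega : 0 ≤ n + 1) (by omega),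
      suppP_eq_singleton (by omega : 0 ≤ n - 1) (by omega)]
    simp
  · have hp1 := hp.one_lt
    have hsupp (m c : ℤ) (hc0 : 0 < c) (hcp : c < p) (hm : m + 1 = p * q + c) :=
      suppP_val_of_add_one_eq hp1 hq hc0.le hcp (not_prime_dvd_two_mul hp hp2 hc0 hcp) hm
    have htwo : ∀ x ∈ suppP p n, 2 ≤ x := by
      intro x hx
      rw [suppP_eq_union_of_add_one_eq hp1 hq (by omega) (by omega) hdiv] at hx
      simp only [Finset.mem_union, Finset.mem_image] at hx
      rcases hx with ⟨y, hy, rfl⟩ | ⟨y, hy, rfl⟩ <;> nlinarith [suppP_pos hp1 _ y hy]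
    rw [extP_eq_of_two_le htwo, hsupp n a (by omega) (by omega) hdiv,
      hsupp (n + 1) (a + 1) (by omega) (by omega) (by omega),
      hsupp (n - 1) (a - 1) (by omega) (by omega) (by omega)]
    simp only [Multiset.map_add, Multiset.map_map, Function.comp_def, add_assoc, add_sub_assoc,
      sub_sub, sub_add]
    abel
end

section
/- Let p > 2 be a prime and n ≥ 1 an integer with n+1 ≡ p−1 (mod p), let d ≥ 0 be the largest integer such that p^{d+1} divides n+2, and write n+1 = a_j p^j + ... + a_0 in base p (so a_i = p−1 for 0 ≤ i ≤ d, and if d < j then a_{d+1} ≠ p−1). Then, as multisets of positive integers, ext(n) = supp(n+1) + supp(n−1) + Σ_{i=1}^{d} supp(n+1−2p^i) + E, where: (a) E = ∅ if n+2 = p^{d+1}; (b) E = supp(n+1−2p^{d+1}) if n+2 = a·p^{d+1} for some integer a with 2 ≤ a ≤ p−1; (c) otherwise (when n+2 ≥ p^{d+2}), E = ∅ if a_{d+1} = 0, E = supp(n+1−2p^{d+1}) + supp(n+1−2p^{d+1}) (two copies) if a_{d+1} = 1, and E = supp(n+1−2p^{d+1}) if 2 ≤ a_{d+1} ≤ p−2.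 (Here supp(−1) = ∅, which occurs in case (b) exactly when n+1 = 2p^{d+1}−1.) -/
/-!
Write `S m` for `supp (m - 1)`, the signed digit sums of `m`, as a multiset. If `m = b + p q`
with a digit `b`, then `S m` is the image of `S q` under `z ↦ p z ± b`, and since `p` is odd
these images never collide. Hence `ext` can be computed one digit at a time. A last digit
`p - 1` carries: `ext (S (p Q - 1)) = S (p Q - 2) + p · ext (S (Q - 1))`, where `p · X` scales
every element. Iterating this over the `d + 1` trailing digits `p - 1` of `n + 1` produces the
terms `supp (n + 1 - 2 p^i)`. What remains is `ext (S q)` for `q = k - 1`, where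
`n + 2 = p^(d+1) k`; its last digit `b` is at most `p - 2`, and then
`ext (S q) = S (q + 1) + E` with `E` equal to `0`, `2 S (q - 1)` or `S (q - 1)` according as
`b = 0`, `b = 1` or `b ≥ 2`.
-/

namespace SignedDigits

variable (p : ℕ)

/-- For `b = 0` both signs give the same sum, which is kept once, as in the set `suppP`. -/
def digitStep (b z : ℤ) : Multiset ℤ :=
  if b = 0 then {p * z} else {p * z - b, p * z + b}

def signedSums : List ℕ → Multiset ℤ
  | [] => 0
  | [a] => {(a : ℤ)}
  | a :: b :: L => (signedSums (b :: L)).bind (digitStep p a)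

def signedDigitSums (m : ℤ) : Multiset ℤ := signedSums p (Nat.digits p m.toNat)

/-- The map whose image over all sign vectors `ε` is `suppP`. -/
def signedValue (L : List ℕ) (ε : Fin (L.length - 1) → Bool) : ℤ :=
  (L.getD (L.length - 1) 0 : ℤ) * (p : ℤ) ^ (L.length - 1) +
    ∑ i : Fin (L.length - 1),
      (if ε i then (1 : ℤ) else -1) * (L.getD i 0 : ℤ) * (p : ℤ) ^ (i : ℕ)

variable {p}

lemma digitStep_zero (z : ℤ) : digitStep p 0 z = {(p : ℤ) * z} := if_pos rfl

lemma digitStep_of_ne_zero {b : ℤ} (hb : b ≠ 0) (z : ℤ) :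
    digitStep p b z = {(p : ℤ) * z - b} + {(p : ℤ) * z + b} := by
  simp [digitStep, hb, Multiset.insert_eq_cons, Multiset.singleton_add]

lemma mem_digitStep {b z x : ℤ} :
    x ∈ digitStep p b z ↔ ∃ s : Bool, x = p * z + (if s then 1 else -1) * b := by
  rcases eq_or_ne b 0 with rfl | hb
  · simp [digitStep_zero]
  · simp [digitStep_of_ne_zero hb, Bool.exists_bool, sub_eq_add_neg, or_comm]

lemma signedSums_cons {a : ℕ} {L : List ℕ} (hL : L ≠ []) :
    signedSums p (a :: L) = (signedSums p L).bind (digitStep p a) := by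
  cases L with
  | nil => exact absurd rfl hL
  | cons b L => rfl

lemma signedValue_cons_cons (a b : ℕ) (L : List ℕ) (ε : Fin (L.length + 1) → Bool) :
    signedValue p (a :: b :: L) ε =
      p * signedValue p (b :: L) (Fin.tail ε) + (if ε 0 then 1 else -1) * a := by
  change ((b :: L).getD L.length 0 : ℤ) * p ^ (L.length + 1) +
      ∑ i : Fin (L.length + 1),
        (if ε i then 1 else -1) * ((a :: b :: L).getD i 0 : ℤ) * p ^ (i : ℕ) =
    p * (((b :: L).getD L.length 0 : ℤ) * p ^ L.length +
      ∑ i : Fin L.length,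
        (if ε i.succ then 1 else -1) * ((b :: L).getD i 0 : ℤ) * p ^ (i : ℕ)) + _
  simp only [Fin.sum_univ_succ, Fin.val_zero, Fin.val_succ, List.getD_cons_zero,
    List.getD_cons_succ, pow_succ, mul_add, Finset.mul_sum]
  ring_nf

lemma mem_signedSums_iff {L : List ℕ} (hL : L ≠ []) {x : ℤ} :
    x ∈ signedSums p L ↔ ∃ ε, signedValue p L ε = x := by
  induction L generalizing x with
  | nil => exact absurd rfl hL
  | cons a L ih =>
    cases L with
    | nil => simp [signedSums, signedValue, eq_comm (a := x)]
    | cons b L =>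
      simp only [signedSums_cons (List.cons_ne_nil b L), Multiset.mem_bind,
        ih (List.cons_ne_nil b L), mem_digitStep]
      show _ ↔ ∃ ε : Fin (L.length + 1) → Bool, _
      simp only [Fin.exists_fin_succ_pi, signedValue_cons_cons, Fin.tail_cons, Fin.cons_zero]
      constructor
      · rintro ⟨_, ⟨ε, rfl⟩, s, rfl⟩; exact ⟨s, ε, rfl⟩
      · rintro ⟨s, ε, rfl⟩; exact ⟨_, ⟨ε, rfl⟩, s, rfl⟩

lemma signedDigitSums_of_nonpos {m : ℤ} (hm : m ≤ 0) : signedDigitSums p m = 0 := by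
  simp [signedDigitSums, Int.toNat_of_nonpos hm, signedSums]

lemma signedDigitSums_of_lt {m : ℤ} (h0 : 0 < m) (hm : m < p) : signedDigitSums p m = {m} := by
  lift m to ℕ using h0.le
  rw [signedDigitSums, Int.toNat_natCast, Nat.digits_of_lt p m (by omega) (by omega)]
  rfl

lemma signedDigitSums_add_mul (hp : 1 < p) {b q : ℤ} (hb0 : 0 ≤ b) (hbp : b < p) (hq : 0 < q) :
    signedDigitSums p (b + p * q) = (signedDigitSums p q).bind fun z => digitStep p b z := by
  lift b to ℕ using hb0
  lift q to ℕ using hq.le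
  rw [signedDigitSums, signedDigitSums, Int.toNat_natCast,
    show (b + p * q : ℤ).toNat = b + p * q by norm_cast,
    Nat.digits_add p hp b q (by omega) (by omega), signedSums_cons]
  exact Nat.digits_ne_nil_iff_ne_zero.mpr (by omega)

lemma signedDigitSums_mul (hp : 1 < p) (x : ℤ) :
    signedDigitSums p (p * x) = (signedDigitSums p x).map ((p : ℤ) * ·) := by
  rcases le_or_gt x 0 with hx | hx
  · rw [signedDigitSums_of_nonpos hx, signedDigitSums_of_nonpos (by nlinarith), Multiset.map_zero]
  · rw [← zero_add ((p : ℤ) * x), signedDigitSums_add_mul hp le_rfl (by omega) hx]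
    simp only [digitStep_zero, Multiset.bind_singleton]

lemma signedDigitSums_pow_mul (hp : 1 < p) (d : ℕ) (x : ℤ) :
    signedDigitSums p (p ^ d * x) = (signedDigitSums p x).map ((p : ℤ) ^ d * ·) := by
  induction d with
  | zero => simp
  | succ d ih =>
    rw [pow_succ', mul_assoc, signedDigitSums_mul hp, ih, Multiset.map_map]
    simp only [Function.comp_def, mul_assoc]

lemma signedDigitSums_induction (hp : 1 < p) {P : Multiset ℤ → Prop} (zero : P 0)
    (single : ∀ a : ℤ, 0 < a → a < p → P {a})
    (step : ∀ s (b : ℤ), 0 ≤ b → b < p → P s → P (s.bind (digitStep p b))) (m : ℤ) :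
    P (signedDigitSums p m) := by
  rcases le_or_gt m 0 with hm | hm
  · rwa [signedDigitSums_of_nonpos hm]
  lift m to ℕ using hm.le
  induction m using Nat.strong_induction_on with
  | _ m ih =>
    rcases lt_or_ge m p with hmp | hmp
    · rw [signedDigitSums_of_lt hm (by exact_mod_cast hmp)]
      exact single m hm (by exact_mod_cast hmp)
    · have hq : 0 < m / p := Nat.div_pos hmp (by omega)
      have hb : ((m % p : ℕ) : ℤ) < p := by exact_mod_cast Nat.mod_lt m (by omega)
      have hdecomp : (m : ℤ) = (m % p : ℕ) + p * (m / p : ℕ) := by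
        exact_mod_cast (Nat.mod_add_div m p).symm
      rw [hdecomp, signedDigitSums_add_mul hp (by positivity) hb (by exact_mod_cast hq)]
      exact step _ _ (by positivity) hb
        (ih _ (Nat.div_lt_self (by omega) hp) (by exact_mod_cast hq))

lemma one_le_of_mem_signedDigitSums (hp : 1 < p) {m x : ℤ} (hx : x ∈ signedDigitSums p m) :
    1 ≤ x := by
  refine signedDigitSums_induction (P := fun s => ∀ x ∈ s, 1 ≤ x) hp (by simp)
    (fun a ha _ => by simpa using (show 1 ≤ a by omega)) ?_ m x hx
  intro s b hb0 hbp hs x hx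
  obtain ⟨z, hz, hx⟩ := Multiset.mem_bind.mp hx
  obtain ⟨_ | _, rfl⟩ := mem_digitStep.mp hx <;>
  · have := hs z hz
    simp only [Bool.false_eq_true, if_false, if_true]
    nlinarith

lemma nodup_bind_digitStep (hodd : Odd p) {s : Multiset ℤ} (hs : s.Nodup) {b : ℤ}
    (hb0 : 0 ≤ b) (hbp : b < p) : (s.bind (digitStep p b)).Nodup := by
  have hp0 : (p : ℤ) ≠ 0 := by exact_mod_cast hodd.pos.ne'
  have hinj (c : ℤ) : Function.Injective (fun z : ℤ => p * z + c) := fun z z' h =>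
    mul_left_cancel₀ hp0 (add_right_cancel h)
  rcases eq_or_lt_of_le hb0 with rfl | hb
  · simp only [digitStep_zero, Multiset.bind_singleton]
    simpa using hs.map (hinj 0)
  simp only [digitStep_of_ne_zero hb.ne', Multiset.bind_add, Multiset.bind_singleton]
  refine Multiset.nodup_add.mpr
    ⟨hs.map (by simpa [sub_eq_add_neg] using hinj (-b)), hs.map (hinj b), ?_⟩
  rw [Multiset.disjoint_left]
  simp only [Multiset.mem_map]
  rintro _ ⟨z, -, rfl⟩ ⟨z', -, h⟩
  -- `p (z - z') = 2b` with `0 < 2b < 2p` forces `p = 2b`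
  have hdiff : (p : ℤ) * (z - z') = 2 * b := by linarith
  obtain ⟨r, hr⟩ := hodd
  rcases lt_trichotomy (z - z') 1 with h1 | h1 | h1
  · nlinarith
  · rw [h1] at hdiff; omega
  · nlinarith

lemma nodup_signedDigitSums (hp : 1 < p) (hodd : Odd p) (m : ℤ) : (signedDigitSums p m).Nodup :=
  signedDigitSums_induction hp Multiset.nodup_zero (fun _ _ _ => Multiset.nodup_singleton _)
    (fun _ _ hb0 hbp hs => nodup_bind_digitStep hodd hs hb0 hbp) m

lemma suppP_val (hp : 1 < p) (hodd : Odd p) (t : ℤ) :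
    (suppP p t).val = signedDigitSums p (t + 1) := by
  rcases lt_or_ge t 0 with ht | ht
  · rw [suppP, if_neg (by omega), signedDigitSums_of_nonpos (by omega)]
    rfl
  have hL : Nat.digits p (t.toNat + 1) ≠ [] := Nat.digits_ne_nil_iff_ne_zero.mpr (by omega)
  have hsupp : suppP p t = (signedDigitSums p (t + 1)).toFinset := by
    ext x
    rw [Multiset.mem_toFinset, signedDigitSums, show (t + 1).toNat = t.toNat + 1 by omega,
      mem_signedSums_iff hL, suppP, if_pos ht]
    simp [signedValue]
  rw [hsupp, Multiset.toFinset_val, (nodup_signedDigitSums hp hodd _).dedup]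

def extOf (s : Multiset ℤ) : Multiset ℤ :=
  s.map (· + 1) + (s.filter (2 ≤ ·)).map (· - 1)

lemma extP_eq_extOf (n : ℤ) : extP p n = extOf (suppP p n).val := rfl

lemma extOf_add (s t : Multiset ℤ) : extOf (s + t) = extOf s + extOf t := by
  simp only [extOf, Multiset.map_add, Multiset.filter_add]
  abel

lemma extOf_singleton (x : ℤ) : extOf {x} = {x + 1} + if 2 ≤ x then {x - 1} else 0 := by
  simp only [extOf, Multiset.map_singleton, Multiset.filter_singleton]
  split_ifs <;> rfl

lemma extOf_bind (s : Multiset ℤ) (f : ℤ → Multiset ℤ) :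
    extOf (s.bind f) = s.bind fun z => extOf (f z) := by
  simp only [extOf, Multiset.map_bind, Multiset.filter_bind, Multiset.bind_add]

lemma extOf_eq_bind (s : Multiset ℤ) : extOf s = s.bind fun x => extOf {x} := by
  have h := extOf_bind s ({·})
  rwa [Multiset.bind_singleton, Multiset.map_id'] at h

lemma extOf_digitStep_pred (hp : 3 ≤ p) {z : ℤ} (hz : 1 ≤ z) :
    extOf (digitStep p (p - 1) z) = digitStep p (p - 2) z + (extOf {z}).map ((p : ℤ) * ·) := by
  rw [digitStep_of_ne_zero (by omega), digitStep_of_ne_zero (by omega), extOf_add,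
    extOf_singleton, extOf_singleton, extOf_singleton,
    if_pos (show 2 ≤ (p : ℤ) * z + (p - 1) by nlinarith)]
  by_cases h2 : 2 ≤ z
  · rw [if_pos h2, if_pos (by nlinarith)]
    simp only [Multiset.map_add, Multiset.map_singleton]
    ring_nf
    abel
  · rw [if_neg h2, if_neg (by nlinarith)]
    simp only [Multiset.map_add, Multiset.map_singleton, Multiset.map_zero]
    ring_nf
    abel

lemma extOf_digitStep (hp : 3 ≤ p) {b z : ℤ} (hb0 : 0 ≤ b) (hbp : b + 2 ≤ p)
    (hz : 1 ≤ z) :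
    extOf (digitStep p b z) = digitStep p (b + 1) z +
      if b = 0 then 0
      else if b = 1 then digitStep p (b - 1) z + digitStep p (b - 1) z
      else digitStep p (b - 1) z := by
  have hpz : 3 ≤ (p : ℤ) * z := by nlinarith
  rcases (show b = 0 ∨ b = 1 ∨ 2 ≤ b by omega) with rfl | rfl | hb2
  · rw [zero_add, digitStep_zero, digitStep_of_ne_zero one_ne_zero, extOf_singleton,
      if_pos (by omega), if_pos rfl, add_zero, add_comm]
  · rw [digitStep_of_ne_zero one_ne_zero, digitStep_of_ne_zero (by norm_num), extOf_add,
      extOf_singleton, extOf_singleton, if_pos (by omega), if_pos (by omega), if_neg one_ne_zero,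
      if_pos rfl, sub_self, digitStep_zero]
    ring_nf
    abel
  · rw [digitStep_of_ne_zero (by omega), digitStep_of_ne_zero (by omega), extOf_add,
      extOf_singleton, extOf_singleton, if_pos (by nlinarith), if_pos (by nlinarith),
      if_neg (by omega), if_neg (by omega), digitStep_of_ne_zero (by omega)]
    ring_nf
    abel

def extRemainder (p : ℕ) (q : ℤ) : Multiset ℤ :=
  if q % p = 0 then 0
  else if q % p = 1 then signedDigitSums p (q - 1) + signedDigitSums p (q - 1)
  else signedDigitSums p (q - 1)

lemma extOf_signedDigitSums (hp : 3 ≤ p) {q : ℤ} (hq : 1 ≤ q) (hqp : q % p ≠ p - 1) :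
    extOf (signedDigitSums p q) = signedDigitSums p (q + 1) + extRemainder p q := by
  have hp0 : (0 : ℤ) < p := by omega
  rw [extRemainder]
  rcases lt_or_ge q p with hlt | hge
  · rw [Int.emod_eq_of_lt (by omega) hlt] at hqp ⊢
    rw [signedDigitSums_of_lt (by omega) hlt, signedDigitSums_of_lt (by omega) (by omega),
      extOf_singleton, if_neg (show q ≠ 0 by omega)]
    rcases eq_or_lt_of_le hq with rfl | hq2
    · rw [if_neg (by norm_num), if_pos rfl, sub_self, signedDigitSums_of_nonpos le_rfl]
      rfl
    · rw [if_pos (by omega), if_neg (show q ≠ 1 by omega),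
        signedDigitSums_of_lt (by omega) (by omega)]
  set b := q % p
  have hb0 : 0 ≤ b := Int.emod_nonneg q hp0.ne'
  have hbp : b + 2 ≤ p := by have := Int.emod_lt_of_pos q hp0; omega
  set r := q / p
  have hq_eq : q = b + p * r := by rw [add_comm]; exact (Int.mul_ediv_add_emod q p).symm
  have hr : 0 < r := by by_contra! hr; nlinarith
  have hsucc :
      signedDigitSums p (q + 1) = (signedDigitSums p r).bind fun z => digitStep p (b + 1) z := by
    rw [← signedDigitSums_add_mul (by omega) (by omega) (by omega) hr]; congr 1; linarith
  have hpred (hb : b ≠ 0) :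
      signedDigitSums p (q - 1) = (signedDigitSums p r).bind fun z => digitStep p (b - 1) z := by
    rw [← signedDigitSums_add_mul (by omega) (by omega) (by omega) hr]; congr 1; linarith
  rw [hq_eq, signedDigitSums_add_mul (by omega) hb0 (by omega) hr, ← hq_eq, extOf_bind, hsucc]
  rw [Multiset.bind_congr fun z hz =>
    extOf_digitStep hp hb0 hbp (one_le_of_mem_signedDigitSums (by omega) hz), Multiset.bind_add]
  congr 1
  by_cases hb1 : b = 0
  · simp [hb1]
  · simp only [hb1, if_false, hpred hb1]
    split_ifs <;> simp only [Multiset.bind_add]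

lemma extOf_signedDigitSums_mul_sub_one (hp : 3 ≤ p) {Q : ℤ} (hQ : 2 ≤ Q) :
    extOf (signedDigitSums p (p * Q - 1)) =
      signedDigitSums p (p * Q - 2) + (extOf (signedDigitSums p (Q - 1))).map ((p : ℤ) * ·) := by
  have h1 : (p : ℤ) * Q - 1 = (p - 1) + p * (Q - 1) := by ring
  have h2 : (p : ℤ) * Q - 2 = (p - 2) + p * (Q - 1) := by ring
  rw [h1, h2, signedDigitSums_add_mul (by omega) (by omega) (by omega) (by omega),
    signedDigitSums_add_mul (by omega) (by omega) (by omega) (by omega), extOf_bind,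
    extOf_eq_bind (signedDigitSums p (Q - 1)), Multiset.map_bind, ← Multiset.bind_add]
  exact Multiset.bind_congr fun z hz =>
    extOf_digitStep_pred hp (one_le_of_mem_signedDigitSums (by omega) hz)

lemma extOf_signedDigitSums_pow_mul_sub_one (hp : 3 ≤ p) {k : ℤ} (hk : 2 ≤ k) (d : ℕ) :
    extOf (signedDigitSums p (p ^ d * k - 1)) =
      ∑ i ∈ Finset.range d, signedDigitSums p (p ^ d * k - 2 * p ^ i) +
        (extOf (signedDigitSums p (k - 1))).map ((p : ℤ) ^ d * ·) := by
  induction d with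
  | zero => simp
  | succ d ih =>
    have hQ : 2 ≤ (p : ℤ) ^ d * k := by
      nlinarith [one_le_pow₀ (show (1 : ℤ) ≤ p by omega) (n := d)]
    have hmap := map_sum (Multiset.mapAddMonoidHom ((p : ℤ) * ·))
      (fun i => signedDigitSums p (p ^ d * k - 2 * p ^ i)) (Finset.range d)
    simp only [Multiset.mapAddMonoidHom_apply] at hmap
    rw [pow_succ', mul_assoc, extOf_signedDigitSums_mul_sub_one hp hQ, ih, Multiset.map_add, hmap,
      Multiset.map_map, Finset.sum_range_succ']
    simp only [← signedDigitSums_mul (show 1 < p by omega), Function.comp_def, pow_zero, mul_one,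
      mul_sub, ← mul_assoc, ← pow_succ', mul_left_comm (p : ℤ) 2]
    abel

lemma extOf_signedDigitSums_pow_sub_one (hp : 3 ≤ p) (d : ℕ) :
    extOf (signedDigitSums p (p ^ (d + 1) - 1)) =
      signedDigitSums p (p ^ (d + 1)) +
        ∑ i ∈ Finset.range (d + 1), signedDigitSums p (p ^ (d + 1) - 2 * p ^ i) := by
  have hp1 : 1 < p := by omega
  have hpred :
      extOf (signedDigitSums p (p - 1)) = signedDigitSums p p + signedDigitSums p (p - 2) := by
    have hSp : signedDigitSums p p = {(p : ℤ)} := by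
      have h := signedDigitSums_mul hp1 1
      rwa [mul_one, signedDigitSums_of_lt one_pos (by omega), Multiset.map_singleton, mul_one] at h
    rw [signedDigitSums_of_lt (by omega) (by omega), extOf_singleton, if_pos (by omega), hSp,
      signedDigitSums_of_lt (by omega) (by omega), sub_add_cancel, sub_sub, one_add_one_eq_two]
  rw [pow_succ, extOf_signedDigitSums_pow_mul_sub_one hp (by omega), hpred, Multiset.map_add,
    ← signedDigitSums_pow_mul hp1, ← signedDigitSums_pow_mul hp1, Finset.sum_range_succ]
  rw [mul_sub, mul_comm _ (2 : ℤ)]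
  abel

lemma extOf_signedDigitSums_pow_mul_sub_one_of_not_dvd (hp : 3 ≤ p) {k : ℤ} (hk : 2 ≤ k)
    (hpk : ¬ (p : ℤ) ∣ k) (d : ℕ) :
    extOf (signedDigitSums p (p ^ (d + 1) * k - 1)) =
      signedDigitSums p (p ^ (d + 1) * k) +
        ∑ i ∈ Finset.range (d + 1), signedDigitSums p (p ^ (d + 1) * k - 2 * p ^ i) +
        (extRemainder p (k - 1)).map ((p : ℤ) ^ (d + 1) * ·) := by
  have hk1 : (k - 1) % p ≠ p - 1 := fun h => hpk <| by
    rw [Int.dvd_iff_emod_eq_zero, show k = k - 1 + 1 by ring, Int.add_emod, h]; simp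
  rw [extOf_signedDigitSums_pow_mul_sub_one hp hk, extOf_signedDigitSums hp (by omega) hk1,
    Multiset.map_add, ← signedDigitSums_pow_mul (by omega), sub_add_cancel]
  abel

lemma map_extRemainder_sub_one (hp : 1 < p) {k : ℤ} (hk : 2 ≤ k) (d : ℕ) :
    (extRemainder p (k - 1)).map ((p : ℤ) ^ (d + 1) * ·) =
      if k < p then signedDigitSums p (p ^ (d + 1) * k - 2 * p ^ (d + 1))
      else if (k - 1) % p = 0 then 0
      else if (k - 1) % p = 1 then
        signedDigitSums p (p ^ (d + 1) * k - 2 * p ^ (d + 1)) +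
          signedDigitSums p (p ^ (d + 1) * k - 2 * p ^ (d + 1))
      else signedDigitSums p (p ^ (d + 1) * k - 2 * p ^ (d + 1)) := by
  have hT : (signedDigitSums p (k - 1 - 1)).map ((p : ℤ) ^ (d + 1) * ·) =
      signedDigitSums p (p ^ (d + 1) * k - 2 * p ^ (d + 1)) := by
    rw [← signedDigitSums_pow_mul hp]; congr 1; ring
  rw [extRemainder]
  by_cases hkp : k < p
  · rw [if_pos hkp, Int.emod_eq_of_lt (by omega) (by omega), if_neg (by omega)]
    rcases eq_or_lt_of_le hk with rfl | hk3
    · rw [if_pos (by norm_num), ← hT, signedDigitSums_of_nonpos (by norm_num)]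
      simp
    · rw [if_neg (by omega), hT]
  · rw [if_neg hkp]
    split_ifs <;> simp only [Multiset.map_zero, Multiset.map_add, hT]

lemma extOf_signedDigitSums_sub_one (hp : 3 ≤ p) {M : ℤ} (hM : 0 < M) {d : ℕ}
    (hd1 : (p : ℤ) ^ (d + 1) ∣ M) (hd2 : ¬ (p : ℤ) ^ (d + 2) ∣ M) :
    extOf (signedDigitSums p (M - 1)) =
      signedDigitSums p M + signedDigitSums p (M - 2) +
        ∑ i ∈ Finset.Icc 1 d, signedDigitSums p (M - 2 * p ^ i) +
        (if M = p ^ (d + 1) then 0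
         else if M < p ^ (d + 2) then signedDigitSums p (M - 2 * p ^ (d + 1))
         else if ((M - 1) / p ^ (d + 1)) % p = 0 then 0
         else if ((M - 1) / p ^ (d + 1)) % p = 1 then
           signedDigitSums p (M - 2 * p ^ (d + 1)) + signedDigitSums p (M - 2 * p ^ (d + 1))
         else signedDigitSums p (M - 2 * p ^ (d + 1))) := by
  obtain ⟨k, rfl⟩ := hd1
  have hpow : 0 < (p : ℤ) ^ (d + 1) := by positivity
  have hk : 1 ≤ k := by by_contra!; nlinarith
  have hpk : ¬ (p : ℤ) ∣ k := fun ⟨t, ht⟩ => hd2 ⟨t, by rw [ht]; ring⟩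
  have hsum (f : ℕ → Multiset ℤ) :
      ∑ i ∈ Finset.range (d + 1), f i = f 0 + ∑ i ∈ Finset.Icc 1 d, f i := by
    rw [Finset.range_eq_Ico, Finset.sum_eq_sum_Ico_succ_bot (by omega), zero_add,
      Finset.Ico_add_one_right_eq_Icc]
  have hdiv : (p ^ (d + 1) * k - 1) / (p : ℤ) ^ (d + 1) = k - 1 :=
    ((Int.ediv_emod_unique (r := p ^ (d + 1) - 1) hpow).mpr ⟨by ring, by omega, by omega⟩).1
  have hlt : (p : ℤ) ^ (d + 1) * k < p ^ (d + 2) ↔ k < p := by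
    rw [pow_succ _ (d + 1), mul_lt_mul_iff_right₀ hpow]
  simp only [hdiv, mul_eq_left₀ hpow.ne', hlt]
  rcases eq_or_lt_of_le hk with rfl | hk2
  · rw [mul_one, if_pos rfl, add_zero, extOf_signedDigitSums_pow_sub_one hp, hsum, pow_zero,
      mul_one, add_assoc]
  rw [if_neg hk2.ne', extOf_signedDigitSums_pow_mul_sub_one_of_not_dvd hp hk2 hpk, hsum, pow_zero,
    mul_one, ← add_assoc, map_extRemainder_sub_one (by omega) hk2]
end SignedDigits

open SignedDigits

theorem ext_eq_of_last_digit_general (p : ℕ) (hp : p.Prime) (hp2 : 2 < p) (n : ℤ) (hn : 1 ≤ n) (d : ℕ)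
    (hd1 : (p : ℤ) ^ (d + 1) ∣ n + 2) (hd2 : ¬ (p : ℤ) ^ (d + 2) ∣ n + 2) :
    extP p n =
      (suppP p (n + 1)).val + (suppP p (n - 1)).val +
        (∑ i ∈ Finset.Icc 1 d, (suppP p (n + 1 - 2 * (p : ℤ) ^ i)).val) +
        (if n + 2 = (p : ℤ) ^ (d + 1) then 0
         else if n + 2 < (p : ℤ) ^ (d + 2) then
           (suppP p (n + 1 - 2 * (p : ℤ) ^ (d + 1))).val
         else
           if ((n + 1) / (p : ℤ) ^ (d + 1)) % (p : ℤ) = 0 then 0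
           else if ((n + 1) / (p : ℤ) ^ (d + 1)) % (p : ℤ) = 1 then
             (suppP p (n + 1 - 2 * (p : ℤ) ^ (d + 1))).val +
               (suppP p (n + 1 - 2 * (p : ℤ) ^ (d + 1))).val
           else (suppP p (n + 1 - 2 * (p : ℤ) ^ (d + 1))).val) := by
  have hsupp (t : ℤ) : (suppP p t).val = signedDigitSums p (t + 1) :=
    suppP_val hp.one_lt (hp.odd_of_ne_two hp2.ne') t
  have key := extOf_signedDigitSums_sub_one hp2 (by omega : 0 < n + 2) hd1 hd2
  rw [show n + 2 - 1 = n + 1 by ring, show n + 2 - 2 = n + 1 - 1 by ring] at key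
  rw [extP_eq_extOf]
  simp only [hsupp, sub_add_eq_add_sub, show n + 1 + 1 = n + 2 by ring]
  exact key

/-- The case `a₀ = p-1` of the decomposition of `ext(n)`.  Here `d` is the
largest integer with `p^(d+1) ∣ n+2`, and the extra term `E` depends on the
digit `a_{d+1} = ⌊(n+1)/p^(d+1)⌋ mod p` of `n+1` when `n+2 ≥ p^(d+2)`. -/
theorem ext_eq_of_last_digit (p : ℕ) (hp : p.Prime) (hp2 : 2 < p) (n : ℤ) (hn : 1 ≤ n)
    (hmod : (n + 1) % (p : ℤ) = (p : ℤ) - 1) (d : ℕ)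
    (hd1 : (p : ℤ) ^ (d + 1) ∣ n + 2) (hd2 : ¬ (p : ℤ) ^ (d + 2) ∣ n + 2) :
    extP p n =
      (suppP p (n + 1)).val + (suppP p (n - 1)).val +
        (∑ i ∈ Finset.Icc 1 d, (suppP p (n + 1 - 2 * (p : ℤ) ^ i)).val) +
        (if n + 2 = (p : ℤ) ^ (d + 1) then 0
         else if n + 2 < (p : ℤ) ^ (d + 2) then
           (suppP p (n + 1 - 2 * (p : ℤ) ^ (d + 1))).val
         else
           if ((n + 1) / (p : ℤ) ^ (d + 1)) % (p : ℤ) = 0 then 0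
           else if ((n + 1) / (p : ℤ) ^ (d + 1)) % (p : ℤ) = 1 then
             (suppP p (n + 1 - 2 * (p : ℤ) ^ (d + 1))).val +
               (suppP p (n + 1 - 2 * (p : ℤ) ^ (d + 1))).val
           else (suppP p (n + 1 - 2 * (p : ℤ) ^ (d + 1))).val) :=
  ext_eq_of_last_digit_general p hp hp2 n hn d hd1 hd2
end

section
/- Let p > 2 be a prime and k an integer with 0 < k < p, and set θ = kπ/p, so that 2·cosθ is a root of R_{p−1}. Then the derivative of R_{p−1} satisfies R_{p−1}′(2·cosθ) = (−1)^{k+1} · p/(2·sin²θ). -/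
open Real

/-- `Rf m t = ∏_{k=1}^m (t - 2 cos(kπ/(m+1)))`, with `Rf 0 t = 1`. -/
noncomputable def Rf (m : ℕ) (t : ℝ) : ℝ :=
  ∏ k ∈ Finset.Icc 1 m, (t - 2 * Real.cos (k * π / (m + 1)))

open Polynomial Polynomial.Chebyshev in
lemma U_coeff_natDegree : ∀ n : ℕ, ((U ℝ n).coeff n = 2 ^ n ∧ (U ℝ n).natDegree ≤ n)
  | 0 => by simp [U_zero]
  | 1 => by
      constructor
      · simp [U_one, coeff_X]
      · simpa using natDegree_C_mul_le 2 (X : ℝ[X])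
  | (n + 2) => by
      obtain ⟨hc1, hd1⟩ := U_coeff_natDegree (n + 1)
      obtain ⟨hc0, hd0⟩ := U_coeff_natDegree n
      have h : U ℝ ((n : ℤ) + 2) = 2 * X * U ℝ (n + 1) - U ℝ n := U_add_two ℝ n
      push_cast at h hc1 hd1 hc0 hd0 ⊢
      have h2 : (2 : ℝ[X]) = Polynomial.C 2 := (map_ofNat Polynomial.C 2).symm
      rw [h]
      constructor
      · rw [coeff_sub, coeff_eq_zero_of_natDegree_lt (lt_of_le_of_lt hd0 (by omega)),
          sub_zero, h2, mul_assoc, coeff_C_mul, coeff_X_mul, hc1]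
        ring
      · refine (natDegree_sub_le _ _).trans (max_le ?_ (hd0.trans (by omega)))
        calc (2 * X * U ℝ (n+1)).natDegree ≤ (2 * X : ℝ[X]).natDegree + (U ℝ (n+1)).natDegree :=
              natDegree_mul_le
          _ ≤ 1 + (n + 1) := by
              gcongr
              · rw [h2]; simpa using natDegree_C_mul_le 2 (X : ℝ[X])
          _ = n + 2 := by omega

open Polynomial Polynomial.Chebyshev in
lemma U_natDegree' (n : ℕ) : (U ℝ n).natDegree = n :=
  le_antisymm (U_coeff_natDegree n).2
    (le_natDegree_of_ne_zero (by rw [(U_coeff_natDegree n).1]; positivity))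

open Polynomial Polynomial.Chebyshev in
lemma U_leadingCoeff' (n : ℕ) : (U ℝ n).leadingCoeff = 2 ^ n := by
  rw [leadingCoeff, U_natDegree', (U_coeff_natDegree n).1]

/-- For a prime `p > 2` and `0 < k < p`, setting `θ = kπ/p`, the derivative of
`R_{p-1}` at the root `2 cos θ` is `(-1)^(k+1) p / (2 sin² θ)`. -/
theorem deriv_R_at_root (p : ℕ) (hp : p.Prime) (hp2 : 2 < p) (k : ℕ)
    (hk0 : 0 < k) (hkp : k < p) :
    deriv (Rf (p - 1)) (2 * Real.cos (k * π / p)) =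
      (-1 : ℝ) ^ (k + 1) * p / (2 * Real.sin (k * π / p) ^ 2) := by
  classical
  open Polynomial Polynomial.Chebyshev in
  have hp1 : 1 ≤ p := by omega
  have hpR : (0 : ℝ) < p := by positivity
  set n := p - 1 with hn
  have hnp : (n : ℝ) + 1 = p := by rw [hn]; push_cast [Nat.cast_sub hp1]; ring
  set P : ℝ[X] := (U ℝ n).comp (C (2⁻¹ : ℝ) * X) with hPdef
  -- evaluation of P
  have hPeval : ∀ t : ℝ, P.eval t = (U ℝ n).eval (2⁻¹ * t) := by
    intro t; simp [hPdef, eval_comp]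
  have hU : ∀ x : ℝ, P.eval (2 * Real.cos x) * Real.sin x = Real.sin (p * x) := by
    intro x
    have := Polynomial.Chebyshev.U_real_cos x (n : ℤ)
    rw [hPeval]
    have h2 : (2 : ℝ)⁻¹ * (2 * Real.cos x) = Real.cos x := by ring
    rw [h2]
    push_cast at this
    rw [this, hnp]
  -- angles
  set v : ℕ → ℝ := fun j => 2 * Real.cos (j * π / p) with hv
  have hangle : ∀ j ∈ Finset.Icc 1 n, 0 < (j : ℝ) * π / p ∧ (j : ℝ) * π / p < π := by
    intro j hj
    simp only [Finset.mem_Icc] at hj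
    have hj1 : (0:ℝ) < j := by exact_mod_cast (by omega : 0 < j)
    constructor
    · positivity
    · rw [div_lt_iff₀ hpR]
      have : (j : ℝ) < p := by
        have : j < p := by omega
        exact_mod_cast this
      nlinarith [Real.pi_pos]
  have hsin : ∀ j ∈ Finset.Icc 1 n, 0 < Real.sin ((j : ℝ) * π / p) := by
    intro j hj
    obtain ⟨h1, h2⟩ := hangle j hj
    exact Real.sin_pos_of_pos_of_lt_pi h1 h2
  have hPzero : ∀ j ∈ Finset.Icc 1 n, P.eval (v j) = 0 := by
    intro j hj
    have h := hU ((j : ℝ) * π / p)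
    have hsj := (hsin j hj).ne'
    have harg : (p : ℝ) * ((j : ℝ) * π / p) = j * π := by field_simp
    rw [harg, Real.sin_nat_mul_pi] at h
    exact (mul_eq_zero.mp h).resolve_right hsj
  -- Q
  set Q : ℝ[X] := ∏ j ∈ Finset.Icc 1 n, (X - C (v j)) with hQdef
  have hinj : Set.InjOn v (Finset.Icc 1 n) := by
    intro i hi j hj hij
    simp only [Finset.coe_Icc, Set.mem_Icc] at hi hj
    have hi' := hangle i (Finset.mem_Icc.mpr hi)
    have hj' := hangle j (Finset.mem_Icc.mpr hj)
    have : Real.cos ((i : ℝ) * π / p) = Real.cos ((j : ℝ) * π / p) := by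
      have := hij; simp only [hv] at this; linarith
    have heq := Real.injOn_cos ⟨hi'.1.le, hi'.2.le⟩ ⟨hj'.1.le, hj'.2.le⟩ this
    field_simp at heq
    have heq' : (i : ℝ) = j := by linarith [heq]
    exact_mod_cast heq'
  have hcard : (Finset.Icc 1 n).card = n := by rw [Nat.card_Icc]; omega
  have hn0 : 0 < n := by omega
  have hPdeg : P.natDegree = n := by
    rw [hPdef, natDegree_comp, U_natDegree', natDegree_C_mul_X _ (by norm_num), mul_one]
  have hPne : P ≠ 0 := fun h => by simp [h] at hPdeg; omega
  have hPlead : P.leadingCoeff = 1 := by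
    rw [hPdef, leadingCoeff_comp (by rw [natDegree_C_mul_X _ (by norm_num)]; omega),
      U_leadingCoeff', U_natDegree']
    have : (C (2⁻¹ : ℝ) * X).leadingCoeff = 2⁻¹ := by
      simp [leadingCoeff_mul]
    rw [this, ← mul_pow]
    norm_num
  have hQmonic : Q.Monic := monic_prod_of_monic _ _ fun j _ => monic_X_sub_C _
  have hQdeg : Q.natDegree = n := by
    rw [hQdef, natDegree_prod _ _ fun j _ => X_sub_C_ne_zero _]
    simp [hcard]
  have hPQ : P = Q := by
    refine Polynomial.eq_of_degree_sub_lt_of_eval_index_eq (Finset.Icc 1 n) hinj ?_ ?_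
    · have hlt : (P - Q).degree < P.degree :=
        Polynomial.degree_sub_lt
          (by rw [degree_eq_natDegree hPne, degree_eq_natDegree hQmonic.ne_zero, hPdeg, hQdeg])
          hPne (by rw [hPlead, hQmonic.leadingCoeff])
      calc (P - Q).degree < P.degree := hlt
        _ = ((Finset.Icc 1 n).card : WithBot ℕ) := by
            rw [degree_eq_natDegree hPne, hPdeg, hcard]
    · intro j hj
      rw [hPzero j hj, hQdef]
      rw [eval_prod]
      exact (Finset.prod_eq_zero hj (by simp)).symm
  -- Rf equals eval of P
  have hRf : Rf n = fun t => P.eval t := by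
    funext t
    rw [hPQ, hQdef, eval_prod]
    unfold Rf
    apply Finset.prod_congr rfl
    intro j hj
    rw [hnp]
    simp [hv]
  -- derivative computation
  set θ := (k : ℝ) * π / p with hθ
  have hkIcc : k ∈ Finset.Icc 1 n := Finset.mem_Icc.mpr ⟨hk0, by omega⟩
  have hsθ : 0 < Real.sin θ := hsin k hkIcc
  set x := 2 * Real.cos θ with hx
  set d := (Polynomial.derivative P).eval x with hd
  have hderiv : deriv (Rf n) x = d := by
    rw [hRf, Polynomial.deriv]
  have h1 : HasDerivAt (fun y : ℝ => P.eval (2 * Real.cos y)) (d * (2 * -Real.sin θ)) θ := by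
    have hc : HasDerivAt (fun y : ℝ => 2 * Real.cos y) (2 * -Real.sin θ) θ :=
      (Real.hasDerivAt_cos θ).const_mul 2
    exact (P.hasDerivAt x).comp θ hc
  have hpθ : (p : ℝ) * θ = k * π := by rw [hθ]; field_simp
  have h3 : HasDerivAt (fun y : ℝ => Real.sin (p * y) / Real.sin y)
      ((Real.cos ((p:ℝ) * θ) * p * Real.sin θ - Real.sin ((p:ℝ) * θ) * Real.cos θ) /
        Real.sin θ ^ 2) θ := by
    have hnum : HasDerivAt (fun y : ℝ => Real.sin ((p:ℝ) * y)) (Real.cos ((p:ℝ) * θ) * p) θ := by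
      have h0 : HasDerivAt (fun y : ℝ => (p : ℝ) * y) p θ := by
        simpa using (hasDerivAt_id θ).const_mul (p : ℝ)
      exact (Real.hasDerivAt_sin ((p:ℝ) * θ)).comp θ h0
    exact hnum.div (Real.hasDerivAt_sin θ) hsθ.ne'
  have hev : (fun y : ℝ => P.eval (2 * Real.cos y)) =ᶠ[nhds θ]
      (fun y : ℝ => Real.sin (p * y) / Real.sin y) := by
    have hne : ∀ᶠ y in nhds θ, Real.sin y ≠ 0 :=
      Real.continuous_sin.continuousAt.eventually_ne hsθ.ne'
    filter_upwards [hne] with y hy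
    rw [eq_div_iff hy]
    exact hU y
  have h1' : HasDerivAt (fun y : ℝ => P.eval (2 * Real.cos y))
      ((Real.cos ((p:ℝ) * θ) * p * Real.sin θ - Real.sin ((p:ℝ) * θ) * Real.cos θ) /
        Real.sin θ ^ 2) θ := h3.congr_of_eventuallyEq hev
  have key : d * (2 * -Real.sin θ) =
      (Real.cos ((p:ℝ) * θ) * p * Real.sin θ - Real.sin ((p:ℝ) * θ) * Real.cos θ) /
        Real.sin θ ^ 2 := h1.unique h1'
  rw [hpθ, Real.sin_nat_mul_pi,
    (by simpa using Real.cos_nat_mul_pi_sub 0 k : Real.cos ((k:ℝ) * π) = (-1)^k)] at key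
  rw [hderiv]
  have hs2 : Real.sin θ ≠ 0 := hsθ.ne'
  rw [pow_succ]
  field_simp at key ⊢
  nlinarith [key, sq_nonneg (Real.sin θ)]
end

section
/- Let p > 2 be a prime, i ≥ 0 an integer, and θ_0 a real number with sin θ_0 ≠ 0 such that cos(p^i·θ_0) = cos(kπ/p) for some integer k with 0 < k < p (so 2·cosθ_0 is a root of R_{p−1}∘Q_{p^i}). Then (R_{p−1}∘Q_{p^i})′(2·cosθ_0) = (−1)^{k+1} · p^{i+1}/(2·sin(p^i·θ_0)·sin(θ_0)). -/
open Real

/-- `Qc n x = 2 T_n(x/2)`, the normalized Chebyshev polynomial of the first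
kind, characterized by `Qc n (2 cos θ) = 2 cos (n θ)`. -/
noncomputable def Qc (n : ℕ) (x : ℝ) : ℝ :=
  2 * (Polynomial.Chebyshev.T ℝ (n : ℤ)).eval (x / 2)

section Aux
open Polynomial Polynomial.Chebyshev

lemma U_deg (n : ℕ) : (U ℝ (n:ℤ)).natDegree = n ∧ (U ℝ (n:ℤ)).leadingCoeff = 2^n := by
  induction n using Nat.twoStepInduction with
  | zero => simp [U_zero]
  | one =>
    constructor
    · simpa using natDegree_C_mul_X (2:ℝ) two_ne_zero
    · rw [Nat.cast_one, U_one]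
      rw [show (2 * X : ℝ[X]) = C 2 * X by rw [map_ofNat], leadingCoeff_C_mul_X]; norm_num
  | more n ih ih1 =>
    obtain ⟨hd, hl⟩ := ih
    obtain ⟨hd1, hl1⟩ := ih1
    have hrec : U ℝ ((n+2 : ℕ) : ℤ) = 2 * X * U ℝ ((n+1:ℕ):ℤ) - U ℝ (n:ℤ) := by
      push_cast
      simpa using U_add_two ℝ (n:ℤ)
    have hUne : U ℝ ((n+1:ℕ):ℤ) ≠ 0 := by
      intro h; rw [h] at hl1; simp at hl1
      exact (pow_ne_zero _ (two_ne_zero)) hl1.symm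
    have h2X : (2 * X : ℝ[X]) = C 2 * X := by rw [map_ofNat]
    have hdA : (2 * X * U ℝ ((n+1:ℕ):ℤ)).natDegree = n + 2 := by
      rw [natDegree_mul (by rw [h2X]; exact mul_ne_zero (C_ne_zero.mpr two_ne_zero) X_ne_zero) hUne, hd1,
        h2X, natDegree_C_mul_X (2:ℝ) two_ne_zero]; ring
    have hlA : (2 * X * U ℝ ((n+1:ℕ):ℤ)).leadingCoeff = 2 ^ (n+2) := by
      rw [leadingCoeff_mul, hl1, h2X, leadingCoeff_C_mul_X]; ring
    have hAne : (2 * X * U ℝ ((n+1:ℕ):ℤ)) ≠ 0 := by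
      intro h; rw [h] at hlA; simp at hlA
      exact (pow_ne_zero _ (two_ne_zero)) hlA.symm
    have hdlt : (U ℝ (n:ℤ)).degree < (2 * X * U ℝ ((n+1:ℕ):ℤ)).degree := by
      apply lt_of_le_of_lt (degree_le_natDegree)
      rw [degree_eq_natDegree hAne, hdA, hd]
      exact_mod_cast Nat.lt_succ_of_lt (Nat.lt_succ_self n)
    constructor
    · rw [hrec, natDegree_eq_of_degree_eq (degree_sub_eq_left_of_degree_lt hdlt), hdA]
    · rw [hrec, leadingCoeff_sub_of_degree_lt hdlt, hlA]

lemma Rf_eq (m : ℕ) (t : ℝ) : Rf m t = (U ℝ (m:ℤ)).eval (t/2) := by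
  rcases Nat.eq_zero_or_pos m with hm | hm
  · subst hm; simp [Rf, U_zero]
  set c : ℕ → ℝ := fun k => 2 * Real.cos (k * π / (m + 1)) with hc
  set V : ℝ[X] := ∏ k ∈ Finset.Icc 1 m, (X - C (c k)) with hV
  set W : ℝ[X] := (U ℝ (m:ℤ)).comp (C (2⁻¹:ℝ) * X) with hW
  have hm1 : (0:ℝ) < (m:ℝ) + 1 := by positivity
  have hVe : ∀ s : ℝ, V.eval s = ∏ k ∈ Finset.Icc 1 m, (s - c k) := by
    intro s; simp [hV, eval_prod]
  have hWe : ∀ s : ℝ, W.eval s = (U ℝ (m:ℤ)).eval (s/2) := by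
    intro s; simp [hW, eval_comp]; ring_nf
  -- roots in (0, π)
  have harg : ∀ k ∈ Finset.Icc 1 m, (k:ℝ) * π / (m+1) ∈ Set.Icc 0 π := by
    intro k hk
    simp only [Finset.mem_Icc] at hk
    constructor
    · positivity
    · rw [div_le_iff₀ hm1]
      have : (k:ℝ) ≤ (m:ℝ) + 1 := by
        have : (k:ℝ) ≤ (m:ℝ) := by exact_mod_cast hk.2
        linarith
      nlinarith [Real.pi_pos]
  have hWroot : ∀ k ∈ Finset.Icc 1 m, W.eval (c k) = 0 := by
    intro k hk
    simp only [Finset.mem_Icc] at hk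
    have h1 : (0:ℝ) < (k:ℝ) * π / (m+1) := by
      have : (0:ℝ) < (k:ℝ) := by exact_mod_cast hk.1
      positivity
    have h2 : (k:ℝ) * π / (m+1) < π := by
      rw [div_lt_iff₀ hm1]
      have hkm : (k:ℝ) < (m:ℝ) + 1 := by
        have : (k:ℝ) ≤ (m:ℝ) := by exact_mod_cast hk.2
        linarith
      nlinarith [Real.pi_pos]
    have hs : Real.sin ((k:ℝ) * π / (m+1)) ≠ 0 :=
      ne_of_gt (Real.sin_pos_of_pos_of_lt_pi h1 h2)
    have hu := U_real_cos ((k:ℝ) * π / (m+1)) (m:ℤ)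
    have harg2 : ((m:ℤ):ℝ) + 1 = (m:ℝ) + 1 := by push_cast; ring
    have : (((m:ℤ):ℝ) + 1) * ((k:ℝ) * π / (m+1)) = (k:ℝ) * π := by
      rw [harg2]; field_simp
    rw [this, Real.sin_nat_mul_pi] at hu
    have hU0 : (U ℝ (m:ℤ)).eval (Real.cos ((k:ℝ) * π / (m+1))) = 0 :=
      by exact (mul_eq_zero.mp hu).resolve_right hs
    rw [hWe]
    have : c k / 2 = Real.cos ((k:ℝ) * π / (m+1)) := by rw [hc]; ring
    rw [this, hU0]
  have hVroot : ∀ k ∈ Finset.Icc 1 m, V.eval (c k) = 0 := by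
    intro k hk
    rw [hVe]
    exact Finset.prod_eq_zero hk (by ring)
  -- injectivity of c on Icc 1 m
  have hinj : Set.InjOn c (Finset.Icc 1 m) := by
    intro a ha b hb hab
    simp only [hc] at hab
    have := Real.injOn_cos (harg a ha) (harg b hb) (by linarith)
    have hne : ((m:ℝ)+1) ≠ 0 := ne_of_gt hm1
    have hπ : (π:ℝ) ≠ 0 := ne_of_gt Real.pi_pos
    field_simp at this
    exact_mod_cast this
  -- degrees
  have hVmon : V.Monic := monic_prod_of_monic _ _ (fun k _ => monic_X_sub_C _)
  have hVdeg : V.natDegree = m := by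
    rw [hV, natDegree_prod _ _ (fun k _ => X_sub_C_ne_zero _)]
    simp
  have hCXne : (C (2⁻¹:ℝ) * X) ≠ 0 := mul_ne_zero (C_ne_zero.mpr (by norm_num)) X_ne_zero
  have hCXdeg : (C (2⁻¹:ℝ) * X).natDegree = 1 := natDegree_C_mul_X _ (by norm_num)
  have hWdeg : W.natDegree = m := by
    rw [hW, natDegree_comp, hCXdeg, (U_deg m).1, mul_one]
  have hWlc : W.leadingCoeff = 1 := by
    rw [hW, leadingCoeff_comp (by rw [hCXdeg]; norm_num), (U_deg m).2,
      leadingCoeff_C_mul_X, (U_deg m).1, ← mul_pow]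
    norm_num
  have hWne : W ≠ 0 := by
    intro h; rw [h] at hWlc; simp at hWlc
  have hdegeq : W.degree = V.degree := by
    rw [degree_eq_natDegree hWne, degree_eq_natDegree hVmon.ne_zero, hWdeg, hVdeg]
  have hsub : (W - V).degree < W.degree :=
    degree_sub_lt hdegeq hWne (by rw [hWlc, hVmon.leadingCoeff])
  have hzero : W - V = 0 := by
    by_cases h0 : W - V = 0
    · exact h0
    · apply eq_zero_of_natDegree_lt_card_of_eval_eq_zero' (W - V) ((Finset.Icc 1 m).image c)
      · intro x hx
        simp only [Finset.mem_image] at hx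
        obtain ⟨k, hk, rfl⟩ := hx
        simp [hWroot k hk, hVroot k hk]
      · rw [Finset.card_image_of_injOn hinj, Nat.card_Icc]
        have : (W - V).natDegree < m := by
          have := (natDegree_lt_iff_degree_lt h0).mpr (by rw [degree_eq_natDegree hWne, hWdeg] at hsub; exact_mod_cast hsub)
          exact this
        simpa using this
  have hWV : W = V := sub_eq_zero.mp hzero
  calc Rf m t = V.eval t := (hVe t).symm
    _ = W.eval t := by rw [hWV]
    _ = _ := hWe t

lemma Rf_sin (m : ℕ) (φ : ℝ) :
    Rf m (2 * Real.cos φ) * Real.sin φ = Real.sin (((m:ℝ) + 1) * φ) := by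
  rw [Rf_eq]
  have : (2 * Real.cos φ) / 2 = Real.cos φ := by ring
  rw [this]
  have := U_real_cos φ (m:ℤ)
  rw [this]
  norm_num

lemma Qc_cos (n : ℕ) (θ : ℝ) : Qc n (2 * Real.cos θ) = 2 * Real.cos ((n:ℝ) * θ) := by
  unfold Qc
  have : (2 * Real.cos θ) / 2 = Real.cos θ := by ring
  rw [this, T_real_cos]
  norm_num


end Aux

open Polynomial Polynomial.Chebyshev in
/-- For a prime `p > 2`, `i ≥ 0`, and `θ₀` with `sin θ₀ ≠ 0` such that
`cos (pⁱ θ₀) = cos (kπ/p)` with `0 < k < p` (so `2 cos θ₀` is a root of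
`R_{p-1} ∘ Q_{pⁱ}`), the derivative of `R_{p-1} ∘ Q_{pⁱ}` at `2 cos θ₀` is
`(-1)^(k+1) p^(i+1) / (2 sin(pⁱ θ₀) sin θ₀)`. -/
theorem deriv_R_comp_Q_at_root (p : ℕ) (hp : p.Prime) (hp2 : 2 < p) (i : ℕ)
    (θ₀ : ℝ) (hθ : Real.sin θ₀ ≠ 0) (k : ℕ) (hk0 : 0 < k) (hkp : k < p)
    (hcos : Real.cos ((p : ℝ) ^ i * θ₀) = Real.cos (k * π / p)) :
    deriv (fun t => Rf (p - 1) (Qc (p ^ i) t)) (2 * Real.cos θ₀) =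
      (-1 : ℝ) ^ (k + 1) * (p : ℝ) ^ (i + 1) /
        (2 * Real.sin ((p : ℝ) ^ i * θ₀) * Real.sin θ₀) := by
  have hp1 : 1 ≤ p := hp.one_lt.le
  have hpR : ((p - 1 : ℕ) : ℝ) + 1 = (p : ℝ) := by
    have : ((p - 1 : ℕ) : ℝ) = (p : ℝ) - 1 := by
      push_cast [Nat.cast_sub hp1]; ring
    rw [this]; ring
  set F : ℝ → ℝ := fun t => Rf (p - 1) (Qc (p ^ i) t) with hF
  set c : ℝ := (p:ℝ)^i with hcdef
  set φ₀ : ℝ := c * θ₀ with hφ₀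
  set x₀ : ℝ := 2 * Real.cos θ₀ with hx₀
  -- F is a polynomial function, hence differentiable
  have hFfun : F = fun t => (U ℝ ((p-1 : ℕ):ℤ)).eval ((T ℝ ((p^i : ℕ):ℤ)).eval (t/2)) := by
    funext t
    rw [hF]
    show Rf (p-1) (Qc (p^i) t) = _
    rw [Rf_eq]
    congr 1
    unfold Qc
    ring
  have hFD : Differentiable ℝ F := by
    rw [hFfun]
    exact (Polynomial.differentiable _).comp
      ((Polynomial.differentiable _).comp (differentiable_id.div_const (2:ℝ)))
  set d : ℝ := deriv F x₀ with hd
  have hFd : HasDerivAt F d x₀ := (hFD x₀).hasDerivAt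
  -- composition with 2 cos θ
  have h2cos : HasDerivAt (fun θ : ℝ => 2 * Real.cos θ) (2 * (-Real.sin θ₀)) θ₀ :=
    (Real.hasDerivAt_cos θ₀).const_mul 2
  have hg : HasDerivAt (fun θ => F (2 * Real.cos θ)) (d * (2 * (-Real.sin θ₀))) θ₀ :=
    by have := hFd.comp θ₀ h2cos; exact this
  have hsinc : HasDerivAt (fun θ : ℝ => Real.sin (c * θ)) (Real.cos (c * θ₀) * (c * 1)) θ₀ :=
    (Real.hasDerivAt_sin (c * θ₀)).comp θ₀ ((hasDerivAt_id θ₀).const_mul c)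
  have hprod : HasDerivAt (fun θ => F (2 * Real.cos θ) * Real.sin (c * θ))
      (d * (2 * (-Real.sin θ₀)) * Real.sin (c * θ₀) +
        F (2 * Real.cos θ₀) * (Real.cos (c * θ₀) * (c * 1))) θ₀ := hg.mul hsinc
  -- the global identity
  have hfun : (fun θ => F (2 * Real.cos θ) * Real.sin (c * θ)) =
      fun θ => Real.sin ((p:ℝ)^(i+1) * θ) := by
    funext θ
    rw [hF]
    show Rf (p-1) (Qc (p^i) (2 * Real.cos θ)) * Real.sin (c * θ) = _
    rw [Qc_cos]
    have hcc : ((p^i : ℕ) : ℝ) = c := by push_cast [hcdef]; ring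
    rw [hcc, Rf_sin, hpR]
    congr 1
    rw [hcdef]; ring
  have hR : HasDerivAt (fun θ : ℝ => Real.sin ((p:ℝ)^(i+1) * θ))
      (Real.cos ((p:ℝ)^(i+1) * θ₀) * ((p:ℝ)^(i+1) * 1)) θ₀ :=
    (Real.hasDerivAt_sin _).comp θ₀ ((hasDerivAt_id θ₀).const_mul _)
  have hEq : d * (2 * (-Real.sin θ₀)) * Real.sin (c * θ₀) +
      F (2 * Real.cos θ₀) * (Real.cos (c * θ₀) * (c * 1)) =
      Real.cos ((p:ℝ)^(i+1) * θ₀) * ((p:ℝ)^(i+1) * 1) := by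
    rw [hfun] at hprod
    exact hprod.unique hR
  -- trig facts at θ₀
  have hpφ : (p:ℝ)^(i+1) * θ₀ = (p:ℝ) * φ₀ := by rw [hφ₀, hcdef, pow_succ]; ring
  obtain ⟨n, hn⟩ := Real.cos_eq_cos_iff.mp hcos
  have hkey : ∃ j : ℤ, (p:ℝ) * φ₀ = (k:ℝ) * π + (j:ℝ) * (2*π) ∨
      (p:ℝ) * φ₀ = -((k:ℝ) * π) + (j:ℝ) * (2*π) := by
    rcases hn with h | h
    · refine ⟨-n * p, Or.inl ?_⟩
      have : φ₀ = (k:ℝ) * π / p - 2 * n * π := by rw [hφ₀] at h ⊢; linarith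
      rw [this]
      have hpne : (p:ℝ) ≠ 0 := by positivity
      field_simp
      push_cast
      ring
    · refine ⟨n * p, Or.inr ?_⟩
      have : φ₀ = 2 * n * π - (k:ℝ) * π / p := by rw [hφ₀] at h ⊢; linarith
      rw [this]
      have hpne : (p:ℝ) ≠ 0 := by positivity
      field_simp
      push_cast
      ring
  have hcoskπ : Real.cos ((k:ℝ) * π) = (-1)^k := by
    have h := Real.cos_int_mul_pi_sub 0 (k:ℤ)
    push_cast at h
    simpa using h
  have hsinP : Real.sin ((p:ℝ)^(i+1) * θ₀) = 0 := by
    rw [hpφ]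
    obtain ⟨j, hj | hj⟩ := hkey <;> rw [hj, Real.sin_add_int_mul_two_pi]
    · exact Real.sin_nat_mul_pi k
    · rw [Real.sin_neg, Real.sin_nat_mul_pi]; ring
  have hcosP : Real.cos ((p:ℝ)^(i+1) * θ₀) = (-1)^k := by
    rw [hpφ]
    obtain ⟨j, hj | hj⟩ := hkey <;> rw [hj, Real.cos_add_int_mul_two_pi]
    · exact hcoskπ
    · rw [Real.cos_neg]; exact hcoskπ
  -- sin φ₀ ≠ 0
  have hkπ0 : 0 < (k:ℝ) * π / p := by
    have : (0:ℝ) < (k:ℝ) := by exact_mod_cast hk0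
    have := Real.pi_pos
    positivity
  have hkππ : (k:ℝ) * π / p < π := by
    rw [div_lt_iff₀ (by positivity : (0:ℝ) < (p:ℝ))]
    have : (k:ℝ) < (p:ℝ) := by exact_mod_cast hkp
    nlinarith [Real.pi_pos]
  have hsinkπ : 0 < Real.sin ((k:ℝ) * π / p) := Real.sin_pos_of_pos_of_lt_pi hkπ0 hkππ
  have hsinφ₀ : Real.sin φ₀ ≠ 0 := by
    intro h0
    have h1 : Real.sin φ₀ ^ 2 + Real.cos φ₀ ^ 2 = 1 := Real.sin_sq_add_cos_sq φ₀
    have h2 : Real.sin ((k:ℝ)*π/p) ^ 2 + Real.cos ((k:ℝ)*π/p) ^ 2 = 1 :=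
      Real.sin_sq_add_cos_sq _
    rw [hφ₀] at h0
    rw [show Real.cos φ₀ = Real.cos ((k:ℝ)*π/p) from hcos] at h1
    nlinarith [hsinkπ]
  have hsinφ₀' : Real.sin ((p:ℝ)^i * θ₀) ≠ 0 := hsinφ₀
  -- F x₀ = 0
  have hg0 : F (2 * Real.cos θ₀) = 0 := by
    have := congrFun hfun θ₀
    rw [hsinP] at this
    exact (mul_eq_zero.mp this).resolve_right hsinφ₀
  rw [hg0, hcosP] at hEq
  -- solve
  show d = (-1 : ℝ) ^ (k + 1) * (p : ℝ) ^ (i + 1) / (2 * Real.sin φ₀ * Real.sin θ₀)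
  rw [← hφ₀] at hEq
  have h2 : d * (2 * (-Real.sin θ₀)) * Real.sin φ₀ = (-1)^k * (p:ℝ)^(i+1) := by
    linarith [hEq]
  field_simp
  rw [pow_succ (-1:ℝ) k]
  nlinarith [h2]
end

section
/- Let p > 2 be a prime, s ≥ 0 an integer, and m an integer with 1 ≤ m ≤ p−1. Define A_m^s = { 2·cos((2lπ + kπ/(m+1))/p^s) : 0 ≤ l ≤ p^s−1, 1 ≤ k ≤ m } ∪ { 2·cos((2lπ − kπ/(m+1))/p^s) : 0 ≤ l ≤ p^s−1, 1 ≤ k ≤ m }. Then the set A_m^s has exactly m·p^s elements, and the polynomial R_m(Q_{p^s}(t)) factors over ℝ as ∏_{β ∈ A_m^s} (t − β); in particular R_m∘Q_{p^s} has m·p^s distinct real roots, all of which are simple. -/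
open Real

/-- The set `A_m^s = { 2 cos((2lπ ± kπ/(m+1))/p^s) : 0 ≤ l ≤ p^s - 1, 1 ≤ k ≤ m }`. -/
noncomputable def Aset (p s m : ℕ) : Finset ℝ :=
  ((Finset.range (p ^ s)) ×ˢ (Finset.Icc 1 m) ×ˢ ({true, false} : Finset Bool)).image
    (fun x =>
      2 * Real.cos ((2 * (x.1 : ℝ) * π +
        (if x.2.2 then (1 : ℝ) else -1) * (x.2.1 : ℝ) * π / (m + 1)) / (p ^ s : ℝ)))

lemma cheb_eval (z : ℂ) (hz : z ≠ 0) (n : ℕ) :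
    (Polynomial.Chebyshev.T ℂ (n : ℤ)).eval ((z + z⁻¹)/2) = (z ^ n + z⁻¹ ^ n)/2 := by
  induction n using Nat.twoStepInduction with
  | zero => simp [Polynomial.Chebyshev.T_zero]
  | one => simp [Polynomial.Chebyshev.T_one]
  | more n ih1 ih2 =>
      push_cast
      rw [Polynomial.Chebyshev.T_add_two]
      push_cast at ih1 ih2
      simp only [Polynomial.eval_sub, Polynomial.eval_mul, Polynomial.eval_ofNat,
        Polynomial.eval_X, ih1, ih2]
      have e1 : z * z⁻¹ = 1 := mul_inv_cancel₀ hz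
      linear_combination ((z ^ n + z⁻¹ ^ n)/2) * e1

lemma prod_root_unity (N : ℕ) (hN : N ≠ 0) {ζ : ℂ} (hζ : IsPrimitiveRoot ζ N) (u : ℂ) :
    ∏ l ∈ Finset.range N, (u - ζ ^ l) = u ^ N - 1 := by
  have hpos : 0 < N := Nat.pos_of_ne_zero hN
  have h := Polynomial.X_pow_sub_one_eq_prod hpos hζ
  have h2 := congrArg (Polynomial.eval u) h
  simp only [Polynomial.eval_sub, Polynomial.eval_pow, Polynomial.eval_X, Polynomial.eval_one,
    Polynomial.eval_prod, Polynomial.eval_C] at h2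
  rw [h2]
  haveI : NeZero N := ⟨hN⟩
  refine Finset.prod_bij (fun (l : ℕ) (_ : l ∈ Finset.range N) => ζ ^ l) ?_ ?_ ?_
    (fun a _ => rfl)
  · intro l hl
    rw [Polynomial.mem_nthRootsFinset hpos, ← pow_mul, mul_comm, pow_mul, hζ.pow_eq_one, one_pow]
  · intro a ha b hb hab
    exact hζ.pow_inj (Finset.mem_range.mp ha) (Finset.mem_range.mp hb) hab
  · intro x hx
    have hx1 : x ^ N = 1 := (Polynomial.mem_nthRootsFinset hpos _).mp hx
    obtain ⟨i, hi, rfl⟩ := hζ.eq_pow_of_pow_eq_one hx1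
    exact ⟨i, Finset.mem_range.mpr hi, rfl⟩

lemma prod_root_unity' (N : ℕ) (hN : N ≠ 0) {ζ : ℂ} (hζ : IsPrimitiveRoot ζ N) (u c : ℂ)
    (hc : c ≠ 0) :
    ∏ l ∈ Finset.range N, (u - ζ ^ l * c) = u ^ N - c ^ N := by
  calc ∏ l ∈ Finset.range N, (u - ζ ^ l * c)
      = ∏ l ∈ Finset.range N, c * (u / c - ζ ^ l) :=
        Finset.prod_congr rfl (fun l _ => by field_simp)
    _ = c ^ N * ((u / c) ^ N - 1) := by
        rw [Finset.prod_mul_distrib, Finset.prod_const, Finset.card_range,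
          prod_root_unity N hN hζ]
    _ = u ^ N - c ^ N := by
        rw [div_pow, mul_sub, mul_div_assoc', mul_div_cancel_left₀ _ (pow_ne_zero N hc), mul_one]

lemma theta_bounds (N m l k : ℕ) (hN : N ≠ 0) (hl : l < N) (hk1 : 1 ≤ k) (hkm : k ≤ m) :
    0 < (2 * (l:ℝ) * π + (k:ℝ) * π / (m + 1)) / (N:ℝ) ∧
      (2 * (l:ℝ) * π + (k:ℝ) * π / (m + 1)) / (N:ℝ) < 2 * π := by
  have hNpos : (0:ℝ) < N := by exact_mod_cast Nat.pos_of_ne_zero hN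
  have hpi := Real.pi_pos
  have hm1 : (0:ℝ) < (m:ℝ) + 1 := by positivity
  have hk0 : (0:ℝ) < k := by exact_mod_cast hk1
  have hka : (k:ℝ) * π / (m+1) < π := by
    rw [div_lt_iff₀ hm1]
    have : (k:ℝ) ≤ m := by exact_mod_cast hkm
    nlinarith
  have hlN : (l:ℝ) ≤ (N:ℝ) - 1 := by
    have : (l:ℝ) + 1 ≤ N := by exact_mod_cast hl
    linarith
  constructor
  · apply div_pos ?_ hNpos
    have : 0 < (k:ℝ) * π / (m+1) := by positivity
    nlinarith [mul_nonneg (by positivity : (0:ℝ) ≤ 2 * (l:ℝ)) hpi.le]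
  · rw [div_lt_iff₀ hNpos]
    nlinarith

lemma aux_ne (m l l' k k' : ℕ) (hll : l < l') (hkm : k ≤ m) (hk1' : 1 ≤ k') :
    2*l*(m+1) + k ≠ 2*l'*(m+1) + k' := by
  intro heq
  have h1 : 2*l*(m+1) + 2*(m+1) ≤ 2*l'*(m+1) := by
    calc 2*l*(m+1) + 2*(m+1) = (l+1)*(2*(m+1)) := by ring
      _ ≤ l'*(2*(m+1)) := Nat.mul_le_mul_right _ hll
      _ = 2*l'*(m+1) := by ring
  obtain ⟨a, ha⟩ : ∃ a, 2*l*(m+1) = a := ⟨_, rfl⟩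
  obtain ⟨b, hb⟩ : ∃ b, 2*l'*(m+1) = b := ⟨_, rfl⟩
  rw [ha, hb] at heq h1
  omega

lemma g_injOn (N m : ℕ) (hN : N ≠ 0) (hm1 : 1 ≤ m) :
    ∀ x ∈ Finset.range N ×ˢ Finset.Icc 1 m, ∀ y ∈ Finset.range N ×ˢ Finset.Icc 1 m,
      2 * Real.cos ((2 * (x.1:ℝ) * π + (x.2:ℝ) * π / (m + 1)) / (N:ℝ))
        = 2 * Real.cos ((2 * (y.1:ℝ) * π + (y.2:ℝ) * π / (m + 1)) / (N:ℝ)) → x = y := by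
  rintro ⟨l, k⟩ hx ⟨l', k'⟩ hy h
  simp only [Finset.mem_product, Finset.mem_range, Finset.mem_Icc] at hx hy
  have hl := hx.1
  have hk1 := hx.2.1
  have hkm := hx.2.2
  have hl' := hy.1
  have hk1' := hy.2.1
  have hkm' := hy.2.2
  have hNR : (N:ℝ) ≠ 0 := Nat.cast_ne_zero.mpr hN
  have hm1R : ((m:ℝ) + 1) ≠ 0 := by positivity
  have hpi := Real.pi_pos
  set θ := (2 * (l:ℝ) * π + (k:ℝ) * π / (m + 1)) / (N:ℝ) with hθ
  set θ' := (2 * (l':ℝ) * π + (k':ℝ) * π / (m + 1)) / (N:ℝ) with hθ'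
  obtain ⟨hθ0, hθ2⟩ := theta_bounds N m l k hN hl hk1 hkm
  obtain ⟨hθ0', hθ2'⟩ := theta_bounds N m l' k' hN hl' hk1' hkm'
  have hcos : Real.cos θ = Real.cos θ' := by linarith
  rw [Real.cos_eq_cos_iff] at hcos
  obtain ⟨j, hj | hj⟩ := hcos
  · -- θ' = 2jπ + θ  ⇒ j = 0
    have hj0 : j = 0 := by
      have h1 : 2 * (j:ℝ) * π = θ' - θ := by linarith
      have h2 : -(2*π) < 2 * (j:ℝ) * π := by rw [h1]; linarith
      have h3 : 2 * (j:ℝ) * π < 2*π := by rw [h1]; linarith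
      have h4 : -1 < (j:ℝ) := by nlinarith
      have h5 : (j:ℝ) < 1 := by nlinarith
      have h4' : (-1:ℤ) < j := by exact_mod_cast h4
      have h5' : (j:ℤ) < 1 := by exact_mod_cast h5
      omega
    subst hj0
    push_cast at hj
    have hθθ : θ = θ' := by linarith
    -- derive integer equation
    have hZ : (((2*l*(m+1) + k : ℕ) : ℝ)) * π = (((2*l'*(m+1) + k' : ℕ) : ℝ)) * π := by
      push_cast
      rw [hθ, hθ'] at hθθ
      field_simp at hθθ
      linear_combination π * hθθ
    have hZ' : (2*l*(m+1) + k : ℕ) = (2*l'*(m+1) + k' : ℕ) := by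
      have := mul_right_cancel₀ (ne_of_gt hpi) hZ
      exact_mod_cast this
    rcases lt_trichotomy l l' with hc | hc | hc
    · exact absurd hZ' (aux_ne m l l' k k' hc hkm hk1')
    · subst hc
      have := Nat.add_left_cancel hZ'
      simp [this]
    · exact absurd hZ'.symm (aux_ne m l' l k' k hc hkm' hk1)
  · -- θ' = 2jπ - θ  ⇒ j = 1 and θ + θ' = 2π, contradiction
    exfalso
    have hj1 : j = 1 := by
      have h1 : 2 * (j:ℝ) * π = θ' + θ := by linarith
      have h2 : 0 < 2 * (j:ℝ) * π := by rw [h1]; linarith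
      have h3 : 2 * (j:ℝ) * π < 4*π := by rw [h1]; linarith
      have h4 : 0 < (j:ℝ) := by nlinarith
      have h5 : (j:ℝ) < 2 := by nlinarith
      have h4' : (0:ℤ) < j := by exact_mod_cast h4
      have h5' : (j:ℤ) < 2 := by exact_mod_cast h5
      omega
    subst hj1
    push_cast at hj
    have hsum : θ + θ' = 2 * π := by linarith
    have hZ : (((2*l*(m+1) + k + (2*l'*(m+1) + k') : ℕ) : ℝ)) * π
        = (((2*N*(m+1) : ℕ) : ℝ)) * π := by
      push_cast
      rw [hθ, hθ'] at hsum
      field_simp at hsum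
      linear_combination π * hsum
    have hZ' : (2*l*(m+1) + k + (2*l'*(m+1) + k') : ℕ) = (2*N*(m+1) : ℕ) := by
      have := mul_right_cancel₀ (ne_of_gt hpi) hZ
      exact_mod_cast this
    -- k + k' = 2(m+1)(N - l - l'), impossible
    obtain ⟨a, ha⟩ : ∃ a, 2*l*(m+1) = a := ⟨_, rfl⟩
    obtain ⟨b, hb⟩ : ∃ b, 2*l'*(m+1) = b := ⟨_, rfl⟩
    obtain ⟨c, hc⟩ : ∃ c, 2*N*(m+1) = c := ⟨_, rfl⟩
    rcases le_or_gt (l + l' + 1) N with hcase | hcase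
    · have h1 : 2*l*(m+1) + 2*l'*(m+1) + 2*(m+1) ≤ 2*N*(m+1) := by
        calc 2*l*(m+1) + 2*l'*(m+1) + 2*(m+1) = (l+l'+1)*(2*(m+1)) := by ring
          _ ≤ N*(2*(m+1)) := Nat.mul_le_mul_right _ hcase
          _ = 2*N*(m+1) := by ring
      rw [ha, hb, hc] at hZ' h1
      omega
    · have h1 : 2*N*(m+1) ≤ 2*l*(m+1) + 2*l'*(m+1) := by
        calc 2*N*(m+1) = N*(2*(m+1)) := by ring
          _ ≤ (l+l')*(2*(m+1)) := Nat.mul_le_mul_right _ (by omega)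
          _ = 2*l*(m+1) + 2*l'*(m+1) := by ring
      rw [ha, hb, hc] at hZ' h1
      omega

open Polynomial in
lemma key (N : ℕ) (hN : N ≠ 0) (φ t : ℝ) :
    Qc N t - 2 * Real.cos φ = ∏ l ∈ Finset.range N, (t - 2 * Real.cos ((2 * l * π + φ) / N)) := by
  -- find z with z + z⁻¹ = t
  obtain ⟨z, hzroot⟩ := Complex.exists_root (f := Polynomial.C (1:ℂ) * X ^ 2 + C (-(t:ℂ)) * X + C 1)
    (by rw [Polynomial.degree_quadratic one_ne_zero]; norm_num)
  have heq : z ^ 2 - (t:ℂ) * z + 1 = 0 := by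
    have := hzroot
    simp [Polynomial.IsRoot, Polynomial.eval_add, Polynomial.eval_mul] at this
    linear_combination this
  have hz0 : z ≠ 0 := by
    intro h; rw [h] at heq; norm_num at heq
  have hzt : z + z⁻¹ = (t : ℂ) := by
    have hinv : z⁻¹ * z = 1 := inv_mul_cancel₀ hz0
    have h2 : ((t:ℂ) - (z + z⁻¹)) * z = 0 := by linear_combination -heq - hinv
    rcases mul_eq_zero.mp h2 with h | h
    · exact (sub_eq_zero.mp h).symm
    · exact absurd h hz0
  have hNC : (N : ℂ) ≠ 0 := Nat.cast_ne_zero.mpr hN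
  set ζ : ℂ := Complex.exp (2 * (π:ℂ) * Complex.I / N) with hζdef
  have hζ : IsPrimitiveRoot ζ N := Complex.isPrimitiveRoot_exp N hN
  set w : ℂ := Complex.exp (((φ : ℂ) / N) * Complex.I) with hwdef
  have hw0 : w ≠ 0 := Complex.exp_ne_zero _
  -- cast to ℂ
  simp only [Qc]
  rw [← Complex.ofReal_inj]
  push_cast
  have hinv : z * z⁻¹ = 1 := mul_inv_cancel₀ hz0
  have hLHS : 2 * (Polynomial.Chebyshev.T ℂ (N:ℤ)).eval ((t:ℂ)/2) = z ^ N + z⁻¹ ^ N := by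
    rw [← hzt, cheb_eval z hz0 N]; ring
  have hW : w ^ N = Complex.exp ((φ:ℂ) * Complex.I) := by
    rw [hwdef, ← Complex.exp_nat_mul]; congr 1; field_simp
  have hcosφ : 2 * Complex.cos (φ:ℂ) = w ^ N + (w ^ N)⁻¹ := by
    rw [Complex.two_cos, neg_mul, Complex.exp_neg, ← hW]
  have hfac : ∀ l ∈ Finset.range N,
      ((t:ℂ) - 2 * Complex.cos ((2 * (l:ℂ) * (π:ℂ) + (φ:ℂ)) / (N:ℂ)))
        = z⁻¹ * ((z - ζ ^ l * w) * (z - (ζ⁻¹) ^ l * w⁻¹)) := by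
    intro l _
    have hv : Complex.exp (((2 * (l:ℂ) * (π:ℂ) + (φ:ℂ)) / (N:ℂ)) * Complex.I) = ζ ^ l * w := by
      rw [hζdef, hwdef, ← Complex.exp_nat_mul, ← Complex.exp_add]
      congr 1
      field_simp
    have hvinv : Complex.exp ((-((2 * (l:ℂ) * (π:ℂ) + (φ:ℂ)) / (N:ℂ))) * Complex.I)
        = (ζ⁻¹) ^ l * w⁻¹ := by
      rw [neg_mul, Complex.exp_neg, hv, mul_inv, inv_pow]
    have hvv : (ζ ^ l * w) * ((ζ⁻¹) ^ l * w⁻¹) = 1 := by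
      rw [inv_pow, ← mul_inv]
      exact mul_inv_cancel₀ (mul_ne_zero (pow_ne_zero _ (Complex.exp_ne_zero _)) hw0)
    rw [Complex.two_cos, hv, hvinv, ← hzt]
    linear_combination ((ζ⁻¹) ^ l * w⁻¹ + ζ ^ l * w - z) * hinv - z⁻¹ * hvv
  rw [hLHS, hcosφ, Finset.prod_congr rfl hfac]
  rw [Finset.prod_mul_distrib, Finset.prod_mul_distrib, Finset.prod_const, Finset.card_range,
    prod_root_unity' N hN hζ z w hw0, prod_root_unity' N hN hζ.inv z w⁻¹ (inv_ne_zero hw0),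
    inv_pow w N]
  have hinvN : z ^ N * z⁻¹ ^ N = 1 := by rw [← mul_pow, hinv, one_pow]
  have hWW : w ^ N * (w ^ N)⁻¹ = 1 := mul_inv_cancel₀ (pow_ne_zero _ hw0)
  linear_combination (w ^ N + (w ^ N)⁻¹ - z ^ N) * hinvN - z⁻¹ ^ N * hWW


/-- Aset equals the image of the "plus" parametrization. -/
lemma Aset_eq_image (p s m : ℕ) (hN : p ^ s ≠ 0) :
    Aset p s m = (Finset.range (p ^ s) ×ˢ Finset.Icc 1 m).image
      (fun x : ℕ × ℕ =>
        2 * Real.cos ((2 * (x.1:ℝ) * π + (x.2:ℝ) * π / (m + 1)) / ((p^s : ℕ) : ℝ))) := by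
  have hps : ((p:ℝ))^s ≠ 0 := by
    rw [← Nat.cast_pow]
    exact_mod_cast hN
  have hm1R : ((m:ℝ) + 1) ≠ 0 := by positivity
  ext x
  simp only [Aset, Finset.mem_image, Finset.mem_product, Finset.mem_range, Finset.mem_Icc,
    Finset.mem_insert, Finset.mem_singleton]
  constructor
  · rintro ⟨⟨l, k, b⟩, ⟨hl, hk, _⟩, rfl⟩
    cases b
    · -- minus sign
      rcases Nat.eq_zero_or_pos l with rfl | hl1
      · refine ⟨(0, k), ⟨Nat.pos_of_ne_zero hN, hk⟩, ?_⟩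
        have harg : ((2 * ((0:ℕ):ℝ) * π + (if false then (1:ℝ) else -1) * (k:ℝ) * π / (m + 1))
            / ((p:ℝ) ^ s))
            = -((2 * ((0:ℕ):ℝ) * π + (k:ℝ) * π / (m + 1)) / (((p^s : ℕ)):ℝ)) := by
          push_cast
          norm_num
          field_simp
        rw [harg, Real.cos_neg]
      · refine ⟨(p^s - l, k), ⟨Nat.sub_lt (Nat.pos_of_ne_zero hN) hl1, hk⟩, ?_⟩
        have harg : ((2 * (l:ℝ) * π + (if false then (1:ℝ) else -1) * (k:ℝ) * π / (m + 1))
            / ((p:ℝ) ^ s))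
            = 2 * π - ((2 * (((p^s - l : ℕ)):ℝ) * π + (k:ℝ) * π / (m + 1)) / (((p^s : ℕ)):ℝ)) := by
          push_cast [Nat.cast_sub (le_of_lt hl)]
          norm_num
          field_simp
          ring
        rw [harg, Real.cos_two_pi_sub]
    · -- plus sign
      refine ⟨(l, k), ⟨hl, hk⟩, ?_⟩
      have harg : ((2 * (l:ℝ) * π + (if true then (1:ℝ) else -1) * (k:ℝ) * π / (m + 1))
          / ((p:ℝ) ^ s))
          = (2 * (l:ℝ) * π + (k:ℝ) * π / (m + 1)) / (((p^s : ℕ)):ℝ) := by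
        push_cast
        norm_num
      rw [harg]
  · rintro ⟨⟨l, k⟩, ⟨hl, hk⟩, rfl⟩
    refine ⟨(l, k, true), ⟨hl, hk, Or.inl rfl⟩, ?_⟩
    have harg : ((2 * (l:ℝ) * π + (if true then (1:ℝ) else -1) * (k:ℝ) * π / (m + 1))
        / ((p:ℝ) ^ s))
        = (2 * (l:ℝ) * π + (k:ℝ) * π / (m + 1)) / (((p^s : ℕ)):ℝ) := by
      push_cast
      norm_num
    rw [harg]

/-- For a prime `p > 2`, `s ≥ 0` and `1 ≤ m ≤ p - 1`, the set `A_m^s` has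
exactly `m p^s` elements and `R_m (Q_{p^s}(t)) = ∏_{β ∈ A_m^s} (t - β)`;
in particular `R_m ∘ Q_{p^s}` has `m p^s` distinct simple real roots. -/
theorem R_comp_Q_factorization (p s m : ℕ) (hp : p.Prime) (hp2 : 2 < p)
    (hm1 : 1 ≤ m) (hmp : m ≤ p - 1) :
    (Aset p s m).card = m * p ^ s ∧
      ∀ t : ℝ, Rf m (Qc (p ^ s) t) = ∏ β ∈ Aset p s m, (t - β) := by
  have hN : p ^ s ≠ 0 := pow_ne_zero _ hp.ne_zero
  have hinj := g_injOn (p ^ s) m hN hm1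
  rw [Aset_eq_image p s m hN]
  constructor
  · rw [Finset.card_image_of_injOn hinj, Finset.card_product, Finset.card_range, Nat.card_Icc]
    simp [Nat.mul_comm]
  · intro t
    calc Rf m (Qc (p ^ s) t)
        = ∏ k ∈ Finset.Icc 1 m, ∏ l ∈ Finset.range (p ^ s),
            (t - 2 * Real.cos ((2 * (l:ℝ) * π + (k:ℝ) * π / (m + 1)) / ((p^s : ℕ) : ℝ))) := by
          rw [Rf]
          exact Finset.prod_congr rfl fun k _ => key (p ^ s) hN ((k:ℝ) * π / (m + 1)) t
      _ = ∏ l ∈ Finset.range (p ^ s), ∏ k ∈ Finset.Icc 1 m,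
            (t - 2 * Real.cos ((2 * (l:ℝ) * π + (k:ℝ) * π / (m + 1)) / ((p^s : ℕ) : ℝ))) :=
          Finset.prod_comm
      _ = ∏ x ∈ Finset.range (p ^ s) ×ˢ Finset.Icc 1 m,
            (t - 2 * Real.cos ((2 * (x.1:ℝ) * π + (x.2:ℝ) * π / (m + 1)) / ((p^s : ℕ) : ℝ))) :=
          by rw [Finset.prod_product]
      _ = _ := (Finset.prod_image hinj).symm
end

section
/- Let p > 2 be a prime, s ≥ 0 an integer, m an integer with 1 ≤ m ≤ p, and j an integer such that p^{s+1} does not divide j and p^{s+1} does not divide m·j. Set θ = jπ/p^{s+1}. Then 2/p^{s+1} ≤ |R_{m−1}(2·cosθ)| < 2^p. -/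
open Real

section AuxRBounds
open Polynomial Polynomial.Chebyshev

lemma two_poly : (2 : ℝ[X]) = Polynomial.C 2 := (map_ofNat Polynomial.C 2).symm

lemma U_spec : ∀ n : ℕ, (U ℝ (n : ℤ)).natDegree = n ∧ (U ℝ (n : ℤ)).leadingCoeff = 2 ^ n
  | 0 => by simp [U_zero]
  | 1 => by
      constructor
      · simp [U_one]
      · simp [U_one, leadingCoeff]
  | n + 2 => by
      obtain ⟨h1d, h1l⟩ := U_spec (n + 1)
      obtain ⟨h0d, h0l⟩ := U_spec n
      have hcast : (((n : ℕ) + 1 : ℕ) : ℤ) = ((n : ℤ) + 1) := by push_cast; ring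
      rw [hcast] at h1d h1l
      have hU : U ℝ (((n : ℕ) + 2 : ℕ) : ℤ) = 2 * X * U ℝ ((n : ℤ) + 1) - U ℝ (n : ℤ) := by
        push_cast
        exact U_add_two ℝ n
      have hq : U ℝ ((n : ℤ) + 1) ≠ 0 := fun h => by
        rw [h, leadingCoeff_zero] at h1l
        exact absurd h1l.symm (by positivity)
      have h2X : (2 * X : ℝ[X]) ≠ 0 := fun h => by
        have := congrArg (fun q => Polynomial.coeff q 1) h
        simp at this
      have hd2X : (2 * X : ℝ[X]).natDegree = 1 := by
        rw [two_poly, natDegree_C_mul_X _ two_ne_zero]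
      have hl2X : (2 * X : ℝ[X]).leadingCoeff = 2 := by
        rw [two_poly, leadingCoeff_C_mul_X]
      have hPd : (2 * X * U ℝ ((n : ℤ) + 1)).natDegree = n + 2 := by
        rw [natDegree_mul h2X hq, h1d, hd2X]; omega
      have hPl : (2 * X * U ℝ ((n : ℤ) + 1)).leadingCoeff = 2 ^ (n + 2) := by
        rw [leadingCoeff_mul, h1l, hl2X]; ring
      have hlt : (U ℝ (n : ℤ)).natDegree < (2 * X * U ℝ ((n : ℤ) + 1)).natDegree := by
        rw [hPd, h0d]; omega
      have hDd : (U ℝ (((n : ℕ) + 2 : ℕ) : ℤ)).natDegree = n + 2 := by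
        rw [hU, natDegree_sub_eq_left_of_natDegree_lt hlt, hPd]
      refine ⟨hDd, ?_⟩
      rw [leadingCoeff, hDd, hU, coeff_sub,
        coeff_eq_zero_of_natDegree_lt (p := U ℝ (n : ℤ)) (by rw [h0d]; omega), sub_zero]
      have := hPl
      rw [leadingCoeff, hPd] at this
      exact this

lemma key_identity (m : ℕ) (hm : 1 ≤ m) (θ : ℝ) :
    Rf (m - 1) (2 * Real.cos θ) * Real.sin θ = Real.sin (m * θ) := by
  set n := m - 1 with hn
  have hmn : m = n + 1 := by omega
  have hmr : ((n : ℝ) + 1) = (m : ℝ) := by rw [hmn]; push_cast; ring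
  have hm0 : (0 : ℝ) < m := by exact_mod_cast (by omega : 0 < m)
  obtain ⟨hQd, hQl⟩ := U_spec n
  set Q := U ℝ (n : ℤ) with hQ
  have hQne : Q ≠ 0 := fun h => by
    rw [h, leadingCoeff_zero] at hQl
    exact absurd hQl.symm (by positivity)
  have hroot : ∀ k ∈ Finset.Icc 1 n, Q.IsRoot (Real.cos (k * π / m)) := by
    intro k hk
    simp only [Finset.mem_Icc] at hk
    have hsin : Real.sin (k * π / m) ≠ 0 := by
      have hk0 : (0:ℝ) < k := by exact_mod_cast (by omega : 0 < k)
      have h1 : 0 < (k : ℝ) * π / m := div_pos (mul_pos hk0 Real.pi_pos) hm0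
      have h2 : (k : ℝ) * π / m < π := by
        rw [div_lt_iff₀ hm0]
        have : (k : ℝ) < m := by
          have : k < m := by omega
          exact_mod_cast this
        nlinarith [Real.pi_pos]
      exact ne_of_gt (Real.sin_pos_of_pos_of_lt_pi h1 h2)
    have hU := U_real_cos ((k : ℝ) * π / m) (n : ℤ)
    have harg : (((n : ℤ) : ℝ) + 1) * ((k : ℝ) * π / m) = k * π := by
      push_cast
      rw [hmr]
      field_simp
    rw [harg, Real.sin_nat_mul_pi] at hU
    unfold Polynomial.IsRoot
    exact (mul_eq_zero.mp hU).resolve_right hsin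
  set M : Multiset ℝ := (Finset.Icc 1 n).val.map (fun k : ℕ => Real.cos (k * π / m)) with hM
  have hnodup : M.Nodup := by
    refine Multiset.Nodup.map_on ?_ (Finset.Icc 1 n).nodup
    intro k1 h1 k2 h2 hcos
    simp only [Finset.mem_val, Finset.mem_Icc] at h1 h2
    have hmem : ∀ k : ℕ, 1 ≤ k → k ≤ n → (k : ℝ) * π / m ∈ Set.Icc 0 π := by
      intro k hk1 hk2
      constructor
      · positivity
      · rw [div_le_iff₀ hm0]
        have : (k : ℝ) ≤ m := by exact_mod_cast (by omega : k ≤ m)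
        nlinarith [Real.pi_pos]
    have := Real.injOn_cos (hmem k1 h1.1 h1.2) (hmem k2 h2.1 h2.2) hcos
    field_simp at this
    exact_mod_cast this
  have hM_le : M ≤ Q.roots := by
    rw [Multiset.le_iff_count]
    intro a
    by_cases ha : a ∈ M
    · rw [Multiset.count_eq_one_of_mem hnodup ha, Polynomial.count_roots]
      obtain ⟨k, hk, rfl⟩ := Multiset.mem_map.mp ha
      exact (Polynomial.rootMultiplicity_pos hQne).mpr (hroot k hk)
    · simp [Multiset.count_eq_zero_of_notMem ha]
  have hMcard : Multiset.card M = n := by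
    rw [hM, Multiset.card_map]
    simpa using Nat.card_Icc 1 n
  have hroots_eq : M = Q.roots :=
    Multiset.eq_of_le_of_card_le hM_le (by rw [hMcard, ← hQd]; exact Q.card_roots')
  have hsplits : Q.Splits :=
    Polynomial.splits_iff_card_roots.mpr (by rw [← hroots_eq, hMcard, hQd])
  have hfact := Polynomial.Splits.eq_prod_roots hsplits
  have heval : Q.eval (Real.cos θ) =
      2 ^ n * ∏ k ∈ Finset.Icc 1 n, (Real.cos θ - Real.cos (k * π / m)) := by
    conv_lhs => rw [hfact]
    rw [Polynomial.eval_mul, Polynomial.eval_C, hQl, ← hroots_eq]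
    congr 1
    rw [Polynomial.eval_multiset_prod, hM, Multiset.map_map, Multiset.map_map,
      Finset.prod_eq_multiset_prod]
    simp [Function.comp]
  have hRf : Rf n (2 * Real.cos θ) =
      2 ^ n * ∏ k ∈ Finset.Icc 1 n, (Real.cos θ - Real.cos (k * π / m)) := by
    unfold Rf
    rw [show ((n : ℝ) + 1) = (m : ℝ) from hmr]
    simp only [← mul_sub]
    rw [Finset.prod_mul_distrib, Finset.prod_const]
    congr 1
    simpa using Nat.card_Icc 1 n
  rw [hRf, ← heval]
  have hU := U_real_cos θ (n : ℤ)
  rw [hU]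
  congr 1
  push_cast
  rw [hmr]

lemma sin_lower_half (N r : ℕ) (h1 : 1 ≤ r) (h2 : 2 * r ≤ N) :
    2 / (N : ℝ) ≤ Real.sin (r * π / N) := by
  have hN : (0:ℝ) < N := by exact_mod_cast (by omega : 0 < N)
  have hx0 : 0 ≤ (r:ℝ) * π / N := by positivity
  have hx : (r:ℝ) * π / N ≤ π / 2 := by
    rw [div_le_div_iff₀ hN (by norm_num)]
    have : (2 * r : ℝ) ≤ N := by exact_mod_cast h2
    nlinarith [Real.pi_pos]
  refine le_trans ?_ (Real.mul_le_sin hx0 hx)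
  have hπ := Real.pi_pos
  have hr1 : (1:ℝ) ≤ r := by exact_mod_cast h1
  have heq : 2 / π * ((r:ℝ) * π / N) = 2 * r / N := by
    field_simp
  rw [heq]
  gcongr
  linarith

lemma sin_lower (N r : ℕ) (h1 : 1 ≤ r) (h2 : r < N) :
    2 / (N : ℝ) ≤ Real.sin (r * π / N) := by
  rcases le_or_gt (2 * r) N with h | h
  · exact sin_lower_half N r h1 h
  · have h1' : 1 ≤ N - r := by omega
    have h2' : 2 * (N - r) ≤ N := by omega
    have hle := sin_lower_half N (N - r) h1' h2'
    have hN : (0:ℝ) < N := by exact_mod_cast (by omega : 0 < N)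
    have heq : Real.sin (((N - r : ℕ) : ℝ) * π / N) = Real.sin (r * π / N) := by
      rw [← Real.sin_pi_sub]
      congr 1
      rw [Nat.cast_sub h2.le]
      field_simp
      ring
    rwa [heq] at hle

lemma abs_sin_nat_mul (n : ℕ) (x : ℝ) : |Real.sin (n * x)| ≤ n * |Real.sin x| := by
  induction n with
  | zero => simp
  | succ k ih =>
    have h : ((k + 1 : ℕ) : ℝ) * x = k * x + x := by push_cast; ring
    rw [h, Real.sin_add]
    calc |Real.sin (k*x) * Real.cos x + Real.cos (k*x) * Real.sin x|
        ≤ |Real.sin (k*x) * Real.cos x| + |Real.cos (k*x) * Real.sin x| := abs_add_le _ _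
      _ ≤ |Real.sin (k*x)| + |Real.sin x| := by
          rw [abs_mul, abs_mul]
          refine add_le_add ?_ ?_
          · exact mul_le_of_le_one_right (abs_nonneg _) (Real.abs_cos_le_one x)
          · exact mul_le_of_le_one_left (abs_nonneg _) (Real.abs_cos_le_one _)
      _ ≤ k * |Real.sin x| + |Real.sin x| := by linarith
      _ = ((k+1 : ℕ) : ℝ) * |Real.sin x| := by push_cast; ring


end AuxRBounds

/-- For a prime `p > 2`, `s ≥ 0`, `1 ≤ m ≤ p`, and an integer `j` with
`p^(s+1) ∤ j` and `p^(s+1) ∤ m j`, setting `θ = jπ/p^(s+1)`, one has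
`2/p^(s+1) ≤ |R_{m-1}(2 cos θ)| < 2^p`. -/
theorem abs_R_bounds (p : ℕ) (hp : p.Prime) (hp2 : 2 < p) (s : ℕ)
    (m : ℕ) (hm1 : 1 ≤ m) (hmp : m ≤ p) (j : ℤ)
    (hj : ¬ ((p : ℤ) ^ (s + 1) ∣ j)) (hmj : ¬ ((p : ℤ) ^ (s + 1) ∣ (m : ℤ) * j)) :
    2 / (p : ℝ) ^ (s + 1) ≤
        |Rf (m - 1) (2 * Real.cos ((j : ℝ) * π / (p : ℝ) ^ (s + 1)))| ∧
      |Rf (m - 1) (2 * Real.cos ((j : ℝ) * π / (p : ℝ) ^ (s + 1)))| < 2 ^ p := by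
  set N : ℕ := p ^ (s + 1) with hN
  have hNpos : 0 < N := pow_pos hp.pos _
  have hNcast : ((N : ℕ) : ℝ) = (p : ℝ) ^ (s + 1) := by rw [hN]; push_cast; ring
  have hNZ : ((N : ℕ) : ℤ) = (p : ℤ) ^ (s + 1) := by rw [hN]; push_cast; ring
  have hNr : (0:ℝ) < (p : ℝ) ^ (s + 1) := by
    rw [← hNcast]; exact_mod_cast hNpos
  set θ : ℝ := (j : ℝ) * π / (p : ℝ) ^ (s + 1) with hθ
  have hsin_ne : Real.sin θ ≠ 0 := by
    intro h
    obtain ⟨t, ht⟩ := Real.sin_eq_zero_iff.mp h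
    apply hj
    rw [← hNZ]
    refine ⟨t, ?_⟩
    have h2 : (t:ℝ) * π * (p:ℝ)^(s+1) = (j:ℝ) * π := by
      rw [ht, hθ]
      field_simp
    have h3 : (t:ℝ) * (p:ℝ)^(s+1) = (j:ℝ) := by
      apply mul_right_cancel₀ Real.pi_ne_zero
      linear_combination h2
    have h4 : ((t * N : ℤ) : ℝ) = ((j : ℤ) : ℝ) := by
      push_cast
      rw [hNcast]
      exact h3
    have h5 := (Int.cast_injective h4 : t * N = j)
    rw [mul_comm] at h5
    omega
  have hsin_pos : 0 < |Real.sin θ| := abs_pos.mpr hsin_ne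
  have hsin_le : |Real.sin θ| ≤ 1 := Real.abs_sin_le_one θ
  have hkey := key_identity m hm1 θ
  have habs : |Rf (m-1) (2 * Real.cos θ)| * |Real.sin θ| = |Real.sin ((m:ℝ) * θ)| := by
    rw [← abs_mul, hkey]
  -- lower bound for |sin (m θ)|
  set a : ℤ := ((m : ℤ) * j) % (N : ℤ) with ha
  have ha0 : 0 ≤ a := Int.emod_nonneg _ (by exact_mod_cast hNpos.ne')
  have haN : a < N := Int.emod_lt_of_pos _ (by exact_mod_cast hNpos)
  have hane : a ≠ 0 := by
    intro h
    exact hmj (by rw [← hNZ]; exact Int.dvd_of_emod_eq_zero h)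
  set q : ℤ := ((m : ℤ) * j) / (N : ℤ) with hq
  have hdecomp : (N : ℤ) * q + a = (m : ℤ) * j := Int.mul_ediv_add_emod _ _
  have hsin_m : |Real.sin ((m:ℝ) * θ)| = |Real.sin ((a : ℝ) * π / (p:ℝ)^(s+1))| := by
    have harg : (m:ℝ) * θ = (a : ℝ) * π / (p:ℝ)^(s+1) + (q : ℝ) * π := by
      rw [hθ]
      have : ((m:ℝ) * (j:ℝ)) = ((N:ℝ) * q + a) := by
        rw [← hNcast] at *
        exact_mod_cast congrArg (fun z : ℤ => (z : ℝ)) hdecomp.symm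
      field_simp
      rw [this, hNcast]
      ring
    rw [harg, Real.sin_add_int_mul_pi, abs_mul]
    rcases Int.even_or_odd q with hqe | hqo
    · rw [hqe.neg_one_zpow]; simp
    · rw [hqo.neg_one_zpow]; simp
  set r : ℕ := a.toNat with hr
  have hra : ((r : ℕ) : ℝ) = (a : ℝ) := by
    rw [hr]
    exact_mod_cast congrArg (fun z : ℤ => (z : ℝ)) (Int.toNat_of_nonneg ha0)
  have hr1 : 1 ≤ r := by omega
  have hrN : r < N := by omega
  have hlow : 2 / (p:ℝ)^(s+1) ≤ |Real.sin ((m:ℝ) * θ)| := by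
    rw [hsin_m, ← hra, ← hNcast]
    have := sin_lower N r hr1 hrN
    refine le_trans this ?_
    exact le_abs_self _
  have hup : |Real.sin ((m:ℝ) * θ)| ≤ m * |Real.sin θ| := abs_sin_nat_mul m θ
  constructor
  · calc 2 / (p:ℝ)^(s+1) ≤ |Real.sin ((m:ℝ) * θ)| := hlow
      _ = |Rf (m-1) (2 * Real.cos θ)| * |Real.sin θ| := habs.symm
      _ ≤ |Rf (m-1) (2 * Real.cos θ)| * 1 := by
          have : 0 ≤ |Rf (m-1) (2 * Real.cos θ)| := abs_nonneg _
          nlinarith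
      _ = |Rf (m-1) (2 * Real.cos θ)| := mul_one _
  · have hRm : |Rf (m-1) (2 * Real.cos θ)| ≤ m := by
      have h2 : |Rf (m-1) (2 * Real.cos θ)| * |Real.sin θ| ≤ m * |Real.sin θ| := by
        rw [habs]; exact hup
      exact le_of_mul_le_mul_right h2 hsin_pos
    have hmp' : (m : ℝ) < 2 ^ p := by
      have h1 : m < 2 ^ p := lt_of_le_of_lt hmp (Nat.lt_two_pow_self)
      exact_mod_cast h1
    linarith
end
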